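/- arXiv:2111.01962 — 4 statements merged into one kernel-verified Lean document; each statement's English description precedes it below -/
import Mathlib

section
/- Let Θ be an n×m phase matrix with m ≥ n, and assume that every (n−1)×m submatrix obtained from Θ by deleting one of its rows has phase rank n−1. Then rank_phase(Θ) = n if and only if for every y ∈ (S¹)^n (i.e., every vector of n complex numbers of modulus 1) there exists a column index j such that the family (y_1·Θ_{1j}, …, y_n·Θ_{nj}) is colopsided. -/
/-!
For a finite family `z`, the point `0` lies in the relative interior of the convex hull iff the
family has a linear relation `∑ i, tᵢ • zᵢ = 0` with all `tᵢ > 0`. So a scaling `y` for which no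
column of `(yᵢ Θᵢⱼ)` is colopsided is the same as a matrix `M` with phases `Θ` (with
`|Mᵢⱼ|` the weights of column `j`) satisfying `y ᵥ* M = 0`; such an `M` has rank at most `n`.
Conversely, a matrix with phases `Θ` and rank at most `n` has a row relation `c ≠ 0`. If some
`c r` vanished, deleting row `r` would give a matrix of rank `< n` with phases
`Θ.submatrix r.succAbove id`. Hence every `c i ≠ 0`, and after absorbing `|c i|` into the rows,
`y = c / |c|` is a scaling without colopsided columns.
-/

/-- The phase rank of a complex matrix `Θ`: the minimum rank over all complex matrices
with nonzero entries whose entrywise phases agree with `Θ`. -/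
noncomputable def phaseRank {n m : ℕ} (Θ : Matrix (Fin n) (Fin m) ℂ) : ℕ :=
  sInf {r | ∃ M : Matrix (Fin n) (Fin m) ℂ,
    (∀ i j, M i j ≠ 0) ∧ (∀ i j, M i j / ‖M i j‖ = Θ i j) ∧ M.rank = r}

open Set Matrix

theorem Matrix.rank_lt_card_height_iff {m n K : Type*} [Field K] [Fintype m] [Fintype n]
    (M : Matrix m n K) : M.rank < Fintype.card m ↔ ∃ c ≠ 0, c ᵥ* M = 0 := by
  rw [M.rank_eq_finrank_span_row, ← Set.finrank, (finrank_range_le_card M.row).lt_iff_ne,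
    ne_comm, Ne, ← linearIndependent_iff_card_eq_finrank_span, Fintype.not_linearIndependent_iff]
  simp only [vecMul_eq_sum, Function.ne_iff, Pi.zero_apply]
  exact exists_congr fun c => and_comm

section ConvexHull

variable {ι E : Type*} [Fintype ι]

theorem mem_convexHull_range_iff [AddCommGroup E] [Module ℝ E] (z : ι → E) {x : E} :
    x ∈ convexHull ℝ (range z) ↔
      ∃ w : ι → ℝ, (∀ i, 0 ≤ w i) ∧ ∑ i, w i = 1 ∧ ∑ i, w i • z i = x := by
  classical
  constructor
  · rw [convexHull_range_eq_exists_affineCombination]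
    rintro ⟨s, w, hw₀, hw₁, rfl⟩
    refine ⟨fun i => if i ∈ s then w i else 0, fun i => ?_, by simpa [Finset.sum_ite_mem], ?_⟩
    · dsimp only
      split_ifs with hi
      exacts [hw₀ i hi, le_rfl]
    · simp [s.affineCombination_eq_linear_combination z w hw₁, ite_smul, Finset.sum_ite_mem]
  · rintro ⟨w, hw₀, hw₁, rfl⟩
    exact mem_convexHull_of_exists_fintype w z hw₀ hw₁ (fun i => mem_range_self i) rfl

theorem coe_affineSpan_convexHull_eq_span [AddCommGroup E] [Module ℝ E] {s : Set E}
    (h : (0 : E) ∈ convexHull ℝ s) :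
    (affineSpan ℝ (convexHull ℝ s) : Set E) = Submodule.span ℝ s := by
  rw [affineSpan_convexHull,
    ← affineSpan_insert_eq_affineSpan ℝ (convexHull_subset_affineSpan s h), affineSpan_insert_zero]

variable [NormedAddCommGroup E] [NormedSpace ℝ E]

theorem image_subset_intrinsicInterior {F : Type*} [FiniteDimensional ℝ E]
    [NormedAddCommGroup F] [NormedSpace ℝ F] (f : F →ₗ[ℝ] E) {s : Set E}
    (hs : (affineSpan ℝ s : Set E) = LinearMap.range f) {U : Set F} (hU : IsOpen U)
    (hUs : f '' U ⊆ s) : f '' U ⊆ intrinsicInterior ℝ s := by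
  let e : LinearMap.range f ≃ₜ affineSpan ℝ s := Homeomorph.setCongr hs.symm
  have hopen : IsOpenMap (e ∘ f.rangeRestrict) :=
    e.isOpenMap.comp (f.rangeRestrict.isOpenMap_of_finiteDimensional f.surjective_rangeRestrict)
  rintro _ ⟨x, hx, rfl⟩
  refine ⟨e (f.rangeRestrict x), interior_maximal ?_ (hopen U hU) ⟨x, hx, rfl⟩, rfl⟩
  rintro _ ⟨y, hy, rfl⟩
  exact hUs ⟨y, hy, rfl⟩

theorem exists_pos_sum_smul_eq_zero_of_zero_mem_intrinsicInterior (z : ι → E)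
    (h : (0 : E) ∈ intrinsicInterior ℝ (convexHull ℝ (range z))) :
    ∃ t : ι → ℝ, (∀ i, 0 < t i) ∧ ∑ i, t i • z i = 0 := by
  set S := convexHull ℝ (range z)
  obtain ⟨x, hx, hx0⟩ := h
  have hspan : (affineSpan ℝ S : Set E) = Submodule.span ℝ (range z) :=
    coe_affineSpan_convexHull_eq_span (hx0 ▸ interior_subset (s := Subtype.val ⁻¹' S) hx)
  -- Moving from `0` a little away from `c`, whose weights are all `1`, stays inside `S`.
  set c := ∑ i, z i
  have hline (δ : ℝ) : -δ • c ∈ affineSpan ℝ S := by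
    rw [← SetLike.mem_coe, hspan]
    exact Submodule.smul_mem _ _ (Submodule.sum_mem _ fun i _ => Submodule.subset_span ⟨i, rfl⟩)
  let F : ℝ → affineSpan ℝ S := fun δ => ⟨-δ • c, hline δ⟩
  have hF : Continuous F := by fun_prop
  have hF0 : F 0 = x := Subtype.ext (by simp [F, hx0])
  have hnear : ∀ᶠ δ in nhdsWithin 0 (Ioi 0), F δ ∈ interior (Subtype.val ⁻¹' S) :=
    nhdsWithin_le_nhds (hF.continuousAt.preimage_mem_nhds (hF0 ▸ isOpen_interior.mem_nhds hx))
  obtain ⟨δ, hδS, hδ⟩ := (hnear.and self_mem_nhdsWithin).exists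
  obtain ⟨μ, hμ₀, -, hμ⟩ :=
    (mem_convexHull_range_iff z).1 (interior_subset (s := Subtype.val ⁻¹' S) hδS)
  refine ⟨fun i => μ i + δ, fun i => add_pos_of_nonneg_of_pos (hμ₀ i) hδ, ?_⟩
  simp only [add_smul, Finset.sum_add_distrib, ← Finset.smul_sum, hμ]
  simp [F, c]

theorem zero_mem_intrinsicInterior_of_pos_sum_smul_eq_zero [FiniteDimensional ℝ E] [Nonempty ι]
    (z : ι → E) {t : ι → ℝ} (ht : ∀ i, 0 < t i) (htz : ∑ i, t i • z i = 0) :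
    (0 : E) ∈ intrinsicInterior ℝ (convexHull ℝ (range z)) := by
  have hσ : 0 < ∑ j, t j := Finset.sum_pos (fun j _ => ht j) Finset.univ_nonempty
  set w : ι → ℝ := fun i => t i / ∑ j, t j
  have hw (i : ι) : 0 < w i := div_pos (ht i) hσ
  have hw₁ : ∑ i, w i = 1 := by rw [← Finset.sum_div, div_self hσ.ne']
  have hwz : ∑ i, w i • z i = 0 := by
    simp only [w, div_eq_inv_mul, mul_smul, ← Finset.smul_sum, htz, smul_zero]
  have h0S : (0 : E) ∈ convexHull ℝ (range z) :=
    (mem_convexHull_range_iff z).2 ⟨w, fun i => (hw i).le, hw₁, hwz⟩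
  let f := Fintype.linearCombination ℝ z
  let U : Set (ι → ℝ) := univ.pi fun i => Ioo 0 (w i)
  -- Adding a multiple of `w` does not move `f s`; it restores total weight `1`.
  have hUS : f '' U ⊆ convexHull ℝ (range z) := by
    rintro _ ⟨s, hs, rfl⟩
    simp only [U, mem_pi, mem_univ, true_implies, mem_Ioo] at hs
    have hsum : ∑ i, s i ≤ 1 := hw₁ ▸ Finset.sum_le_sum fun i _ => (hs i).2.le
    refine (mem_convexHull_range_iff z).2
      ⟨fun i => s i + (1 - ∑ j, s j) * w i, fun i => ?_, ?_, ?_⟩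
    · exact add_nonneg (hs i).1.le (mul_nonneg (sub_nonneg.2 hsum) (hw i).le)
    · rw [Finset.sum_add_distrib, ← Finset.mul_sum, hw₁]
      ring
    · simp only [add_smul, mul_smul, Finset.sum_add_distrib, ← Finset.smul_sum, hwz, smul_zero,
        add_zero, f, Fintype.linearCombination_apply]
  refine image_subset_intrinsicInterior f ?_ (isOpen_set_pi finite_univ fun _ _ => isOpen_Ioo) hUS
    ⟨w / 2, fun i _ => ⟨half_pos (hw i), half_lt_self (hw i)⟩, ?_⟩
  · rw [coe_affineSpan_convexHull_eq_span h0S, Fintype.range_linearCombination]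
  · simp [f, Fintype.linearCombination_apply, div_eq_inv_mul, mul_smul, ← Finset.smul_sum, hwz]

theorem zero_mem_intrinsicInterior_convexHull_range_iff [FiniteDimensional ℝ E] [Nonempty ι]
    (z : ι → E) :
    (0 : E) ∈ intrinsicInterior ℝ (convexHull ℝ (range z)) ↔
      ∃ t : ι → ℝ, (∀ i, 0 < t i) ∧ ∑ i, t i • z i = 0 :=
  ⟨exists_pos_sum_smul_eq_zero_of_zero_mem_intrinsicInterior z,
    fun ⟨_, ht, htz⟩ => zero_mem_intrinsicInterior_of_pos_sum_smul_eq_zero z ht htz⟩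

end ConvexHull

def HasPhase {ι κ : Type*} (M Θ : Matrix ι κ ℂ) : Prop :=
  (∀ i j, M i j ≠ 0) ∧ ∀ i j, M i j / ‖M i j‖ = Θ i j

namespace HasPhase

variable {ι κ : Type*} {M Θ : Matrix ι κ ℂ}

theorem self (hΘ : ∀ i j, ‖Θ i j‖ = 1) : HasPhase Θ Θ :=
  ⟨fun i j h => by simpa [h] using hΘ i j, fun i j => by simp [hΘ i j]⟩

theorem of_pos_mul (hΘ : ∀ i j, ‖Θ i j‖ = 1) {r : ι → κ → ℝ} (hr : ∀ i j, 0 < r i j) :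
    HasPhase (of fun i j => (r i j : ℂ) * Θ i j) Θ := by
  have hr' (i j) : (r i j : ℂ) ≠ 0 := Complex.ofReal_ne_zero.2 (hr i j).ne'
  refine ⟨fun i j => mul_ne_zero (hr' i j) ((self hΘ).1 i j), fun i j => ?_⟩
  rw [of_apply, norm_mul, hΘ, mul_one, Complex.norm_real, Real.norm_of_nonneg (hr i j).le,
    mul_div_cancel_left₀ _ (hr' i j)]

theorem norm_mul_eq (h : HasPhase M Θ) (i : ι) (j : κ) : (‖M i j‖ : ℂ) * Θ i j = M i j := by
  rw [← h.2 i j, mul_div_cancel₀ _ (by simpa using h.1 i j)]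

theorem submatrix {ι' κ' : Type*} (h : HasPhase M Θ) (e : ι' → ι) (f : κ' → κ) :
    HasPhase (M.submatrix e f) (Θ.submatrix e f) :=
  ⟨fun i j => h.1 (e i) (f j), fun i j => h.2 (e i) (f j)⟩

theorem scale_rows (h : HasPhase M Θ) {r : ι → ℝ} (hr : ∀ i, 0 < r i) :
    HasPhase (of fun i j => (r i : ℂ) * M i j) Θ := by
  have hr' (i) : (r i : ℂ) ≠ 0 := Complex.ofReal_ne_zero.2 (hr i).ne'
  refine ⟨fun i j => mul_ne_zero (hr' i) (h.1 i j), fun i j => ?_⟩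
  rw [of_apply, norm_mul, Complex.norm_real, Real.norm_of_nonneg (hr i).le, Complex.ofReal_mul,
    mul_div_mul_left _ _ (hr' i), h.2]

end HasPhase

section PhaseRank

variable {n m : ℕ} {Θ : Matrix (Fin n) (Fin m) ℂ}

theorem phaseRank_le_rank {M : Matrix (Fin n) (Fin m) ℂ} (h : HasPhase M Θ) :
    phaseRank Θ ≤ M.rank :=
  Nat.sInf_le ⟨M, h.1, h.2, rfl⟩

theorem phaseRank_le (hΘ : ∀ i j, ‖Θ i j‖ = 1) : phaseRank Θ ≤ n :=
  (phaseRank_le_rank (.self hΘ)).trans (rank_le_height Θ)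

theorem phaseRank_lt_iff (hΘ : ∀ i j, ‖Θ i j‖ = 1) {r : ℕ} :
    phaseRank Θ < r ↔ ∃ M, HasPhase M Θ ∧ M.rank < r := by
  refine ⟨fun h => ?_, fun ⟨M, hM, hr⟩ => (phaseRank_le_rank hM).trans_lt hr⟩
  have hself := HasPhase.self hΘ
  obtain ⟨M, hM₀, hMΘ, hM⟩ : phaseRank Θ ∈ _ := Nat.sInf_mem ⟨_, Θ, hself.1, hself.2, rfl⟩
  exact ⟨M, ⟨hM₀, hMΘ⟩, hM.trans_lt h⟩

end PhaseRank

theorem exists_hasPhase_vecMul_eq_zero_iff {ι κ : Type*} [Fintype ι] [Nonempty ι]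
    {Θ : Matrix ι κ ℂ} (hΘ : ∀ i j, ‖Θ i j‖ = 1) (y : ι → ℂ) :
    (∃ M, HasPhase M Θ ∧ y ᵥ* M = 0) ↔
      ∀ j, (0 : ℂ) ∈ intrinsicInterior ℝ (convexHull ℝ (range fun i => y i * Θ i j)) := by
  simp only [zero_mem_intrinsicInterior_convexHull_range_iff, funext_iff, vecMul, dotProduct,
    Pi.zero_apply, Complex.real_smul]
  constructor
  · rintro ⟨M, hM, hyM⟩ j
    refine ⟨fun i => ‖M i j‖, fun i => norm_pos_iff.2 (hM.1 i j), ?_⟩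
    rw [← hyM j]
    refine Finset.sum_congr rfl fun i _ => ?_
    rw [← hM.norm_mul_eq i j]
    ring
  · intro h
    choose t ht htz using h
    refine ⟨of fun i j => (t j i : ℂ) * Θ i j, .of_pos_mul hΘ fun i j => ht j i, fun j => ?_⟩
    rw [← htz j]
    exact Finset.sum_congr rfl fun i _ => by simp only [of_apply]; ring

theorem HasPhase.apply_ne_zero_of_vecMul_eq_zero {n m : ℕ}
    {M Θ : Matrix (Fin (n + 1)) (Fin m) ℂ} (hM : HasPhase M Θ)
    (hrows : ∀ r : Fin (n + 1), n ≤ phaseRank (Θ.submatrix r.succAbove id))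
    {c : Fin (n + 1) → ℂ} (hc : c ≠ 0) (hcM : c ᵥ* M = 0) (r : Fin (n + 1)) : c r ≠ 0 := by
  intro hcr
  have hc' : c ∘ r.succAbove ≠ 0 := by
    contrapose! hc
    ext i
    rcases r.eq_self_or_eq_succAbove i with rfl | ⟨k, rfl⟩
    exacts [hcr, congrFun hc k]
  have hcM' : (c ∘ r.succAbove) ᵥ* M.submatrix r.succAbove id = 0 := by
    ext j
    have := congrFun hcM j
    simp only [vecMul, dotProduct, Pi.zero_apply] at this ⊢
    rwa [Fin.sum_univ_succAbove _ r, hcr, zero_mul, zero_add] at this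
  have hrank := (rank_lt_card_height_iff _).2 ⟨_, hc', hcM'⟩
  rw [Fintype.card_fin] at hrank
  exact ((hrows r).trans (phaseRank_le_rank (hM.submatrix _ _)) |>.trans_lt hrank).false

theorem exists_hasPhase_vecMul_eq_zero_iff_unimodular {n m : ℕ}
    {Θ : Matrix (Fin (n + 1)) (Fin m) ℂ}
    (hrows : ∀ r : Fin (n + 1), n ≤ phaseRank (Θ.submatrix r.succAbove id)) :
    (∃ M, HasPhase M Θ ∧ ∃ c ≠ 0, c ᵥ* M = 0) ↔
      ∃ y : Fin (n + 1) → ℂ, (∀ i, ‖y i‖ = 1) ∧ ∃ M, HasPhase M Θ ∧ y ᵥ* M = 0 := by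
  constructor
  · rintro ⟨M, hM, c, hc, hcM⟩
    have hc₀ := hM.apply_ne_zero_of_vecMul_eq_zero hrows hc hcM
    have hnorm (i) : (‖c i‖ : ℂ) ≠ 0 := by simpa using hc₀ i
    refine ⟨fun i => c i / ‖c i‖, fun i => by simp [hc₀ i], of fun i j => (‖c i‖ : ℂ) * M i j,
      hM.scale_rows fun i => norm_pos_iff.2 (hc₀ i), ?_⟩
    rw [← hcM]
    ext j
    simp only [vecMul, dotProduct]
    refine Finset.sum_congr rfl fun i _ => ?_
    rw [of_apply, ← mul_assoc, div_mul_cancel₀ _ (hnorm i)]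
  · rintro ⟨y, hy, M, hM, hyM⟩
    exact ⟨M, hM, y, fun h => by simpa [h] using hy 0, hyM⟩

theorem phaseRank_eq_max_iff_every_scaling_has_colopsided_column_general {n m : ℕ}
    (Θ : Matrix (Fin (n + 1)) (Fin m) ℂ) (hphase : ∀ i j, ‖Θ i j‖ = 1)
    (hrows : ∀ r : Fin (n + 1), phaseRank (Θ.submatrix r.succAbove id) = n) :
    phaseRank Θ = n + 1 ↔
      ∀ y : Fin (n + 1) → ℂ, (∀ i, ‖y i‖ = 1) →
        ∃ j, (0 : ℂ) ∉ intrinsicInterior ℝ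
          (convexHull ℝ (Set.range fun i => y i * Θ i j)) := by
  have hlt : phaseRank Θ < n + 1 ↔ ∃ y : Fin (n + 1) → ℂ, (∀ i, ‖y i‖ = 1) ∧
      ∀ j, (0 : ℂ) ∈ intrinsicInterior ℝ (convexHull ℝ (Set.range fun i => y i * Θ i j)) :=
    calc phaseRank Θ < n + 1 ↔ ∃ M, HasPhase M Θ ∧ M.rank < n + 1 := phaseRank_lt_iff hphase
      _ ↔ ∃ M, HasPhase M Θ ∧ ∃ c ≠ 0, c ᵥ* M = 0 := by
        simp only [← rank_lt_card_height_iff, Fintype.card_fin]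
      _ ↔ ∃ y : Fin (n + 1) → ℂ, (∀ i, ‖y i‖ = 1) ∧ ∃ M, HasPhase M Θ ∧ y ᵥ* M = 0 :=
        exists_hasPhase_vecMul_eq_zero_iff_unimodular fun r => (hrows r).ge
      _ ↔ _ := by simp only [exists_hasPhase_vecMul_eq_zero_iff hphase]
  constructor
  · intro h y hy
    by_contra! hcol
    exact (hlt.2 ⟨y, hy, hcol⟩).ne h
  · intro h
    by_contra hne
    obtain ⟨y, hy, hcol⟩ := hlt.1 ((phaseRank_le hphase).lt_of_ne hne)
    obtain ⟨j, hj⟩ := h y hy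
    exact hj (hcol j)

/-- Let `Θ` be an `(n+1) × m` phase matrix with `m ≥ n+1` such that each submatrix obtained
by deleting one row has maximal phase rank `n`. Then `Θ` has maximal phase rank `n+1` iff
every unimodular scaling of its rows makes some column colopsided (i.e., `0` not in the
relative interior of the convex hull of the scaled column entries). -/
theorem phaseRank_eq_max_iff_every_scaling_has_colopsided_column {n m : ℕ}
    (hnm : n + 1 ≤ m)
    (Θ : Matrix (Fin (n + 1)) (Fin m) ℂ) (hphase : ∀ i j, ‖Θ i j‖ = 1)
    (hrows : ∀ r : Fin (n + 1), phaseRank (Θ.submatrix r.succAbove id) = n) :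
    phaseRank Θ = n + 1 ↔
      ∀ y : Fin (n + 1) → ℂ, (∀ i, ‖y i‖ = 1) →
        ∃ j, (0 : ℂ) ∉ intrinsicInterior ℝ
          (convexHull ℝ (Set.range fun i => y i * Θ i j)) :=
  phaseRank_eq_max_iff_every_scaling_has_colopsided_column_general Θ hphase hrows
end

section
/- If n ≤ m and m < 2^{n−1}/n, then every n×m phase matrix Θ satisfies rank_phase(Θ) < n; that is, for every such Θ there exists a complex n×m matrix M of rank less than n with all entries nonzero and M_ij/|M_ij| = Θ_ij for all i,j. -/
open Complex ComplexConjugate Finset Filter Topology Matrix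
open scoped Real

variable {ι : Type*}

lemma Real.sin_add_int_mul_pi_pos_iff {δ : ℝ} (h₀ : 0 < δ) (hπ : δ < π) (m : ℤ) :
    0 < Real.sin (δ + m * π) ↔ Even m := by
  have hδ := Real.sin_pos_of_pos_of_lt_pi h₀ hπ
  rcases m.even_or_odd with he | ho
  · simp [Real.sin_add_int_mul_pi, he.neg_one_zpow, hδ, he]
  · simp [Real.sin_add_int_mul_pi, ho.neg_one_zpow, hδ.le, Int.not_even_iff_odd.2 ho]

/-- Turn `ψ` forward until the first `θ k - ψ` reaches `π / 2 + ℤπ`: no other cosine changes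
sign on the way, and the direction reached is determined by `k` and the sign at `k`. -/
lemma exists_pivot_of_cos_ne_zero [Fintype ι] [Nonempty ι] {θ : ι → ℝ}
    (hθ : Pairwise fun i k => Real.sin (θ i - θ k) ≠ 0) {ψ : ℝ}
    (hψ : ∀ i, Real.cos (θ i - ψ) ≠ 0) :
    ∃ k, ∀ i ≠ k, (0 < Real.cos (θ i - ψ) ↔
      (0 < Real.cos (θ k - ψ) ↔ 0 < Real.sin (θ i - θ k))) := by
  set x : ι → ℝ := fun i => θ i - ψ + π / 2
  have hcos i : Real.cos (θ i - ψ) = Real.sin (x i) := (Real.sin_add_pi_div_two _).symm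
  set δ : ι → ℝ := fun i => toIocMod Real.pi_pos 0 (x i)
  set m : ι → ℤ := fun i => toIocDiv Real.pi_pos 0 (x i)
  have hx i : x i = δ i + m i * π := by
    rw [← zsmul_eq_mul, toIocMod_add_toIocDiv_zsmul]
  have hδ i : 0 < δ i ∧ δ i < π := by
    obtain ⟨h₀, hπ⟩ := toIocMod_mem_Ioc Real.pi_pos 0 (x i)
    rw [zero_add] at hπ
    refine ⟨h₀, hπ.lt_of_ne fun h => hψ i ?_⟩
    rw [hcos, hx, show δ i = π from h, Real.sin_add_int_mul_pi, Real.sin_pi, mul_zero]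
  have hsign i : 0 < Real.cos (θ i - ψ) ↔ Even (m i) := by
    rw [hcos, hx, Real.sin_add_int_mul_pi_pos_iff (hδ i).1 (hδ i).2]
  obtain ⟨k, -, hk⟩ := exists_min_image univ δ univ_nonempty
  refine ⟨k, fun i hik => ?_⟩
  have hdiff : θ i - θ k = (δ i - δ k) + ((m i - m k : ℤ) : ℝ) * π := by
    push_cast
    linear_combination hx i - hx k
  have hlt : δ k < δ i := (hk i (mem_univ i)).lt_of_ne fun h => hθ hik <| by
    rw [hdiff, h, sub_self, zero_add, Real.sin_int_mul_pi]
  rw [hsign, hsign, hdiff,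
    Real.sin_add_int_mul_pi_pos_iff (by linarith) (by linarith [hδ i, hδ k]), Int.even_sub]
  tauto

namespace Complex

lemma re_mul_conj (z w : ℂ) : (z * conj w).re = ‖z‖ * ‖w‖ * Real.cos (arg z - arg w) := by
  rw [Real.cos_sub, mul_re, conj_re, conj_im, ← norm_mul_cos_arg z, ← norm_mul_cos_arg w,
    ← norm_mul_sin_arg z, ← norm_mul_sin_arg w]
  ring

lemma im_mul_conj (z w : ℂ) : (z * conj w).im = ‖z‖ * ‖w‖ * Real.sin (arg z - arg w) := by
  rw [Real.sin_sub, mul_im, conj_re, conj_im, ← norm_mul_cos_arg z, ← norm_mul_cos_arg w,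
    ← norm_mul_sin_arg z, ← norm_mul_sin_arg w]
  ring

lemma re_mul_conj_mul_one_add_mul_I (z u : ℂ) (τ : ℝ) :
    (z * conj (u * (1 + τ * I))).re = (z * conj u).re + τ * (z * conj u).im := by
  simp only [map_mul, map_add, map_one, conj_ofReal, conj_I, mul_re, mul_im, add_re, add_im,
    one_re, one_im, ofReal_re, ofReal_im, neg_re, neg_im, I_re, I_im, conj_re, conj_im]
  ring

lemma im_mul_conj_eq_zero_of_re_eq_zero {z w u : ℂ} (hz : (z * conj u).re = 0)
    (hw : (w * conj u).re = 0) (hu : u ≠ 0) : (z * conj w).im = 0 := by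
  have key : (z * conj u) * conj (w * conj u) = (z * conj w) * (normSq u : ℂ) := by
    rw [← mul_conj, map_mul, conj_conj]; ring
  have := congrArg im key
  rw [mul_im, conj_re, conj_im, hz, hw, im_mul_ofReal] at this
  simpa [normSq_eq_zero, hu] using this.symm

lemma countable_setOf_im_exp_mul_eq_zero {s : ℝ} (hs : s ≠ 0) {z : ℂ} (hz : z ≠ 0) :
    {t : ℝ | (exp ((s * t : ℝ) * I) * z).im = 0}.Countable := by
  refine (Set.countable_range fun ℓ : ℤ => (ℓ * π - arg z) / s).mono fun t ht => ?_
  have him : (exp ((s * t : ℝ) * I) * z).im = ‖z‖ * Real.sin (s * t + arg z) := by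
    conv_lhs => rw [← norm_mul_exp_arg_mul_I z]
    rw [mul_left_comm, ← exp_add, ← add_mul, ← ofReal_add, im_ofReal_mul, exp_ofReal_mul_I_im]
  rw [Set.mem_ofPred_eq, him, mul_eq_zero, Real.sin_eq_zero_iff] at ht
  obtain ⟨ℓ, hℓ⟩ := ht.resolve_left (norm_ne_zero_iff.2 hz)
  exact ⟨ℓ, by field_simp; linarith⟩

lemma ofReal_mul_div_norm {r : ℝ} (hr : 0 < r) {z : ℂ} (hz : ‖z‖ = 1) :
    (r * z) / (‖(r : ℂ) * z‖ : ℂ) = z := by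
  rw [norm_mul, hz, mul_one, norm_real, Real.norm_of_nonneg hr.le,
    mul_div_cancel_left₀ _ (ofReal_ne_zero.2 hr.ne')]

end Complex

lemma exists_pivot_re_mul_conj [Fintype ι] [Nonempty ι] {w : ι → ℂ}
    (hw : Pairwise fun i k => (w i * conj (w k)).im ≠ 0) {u : ℂ}
    (hu : ∀ i, (w i * conj u).re ≠ 0) :
    ∃ k, ∀ i ≠ k, (0 < (w i * conj u).re ↔
      (0 < (w k * conj u).re ↔ 0 < (w i * conj (w k)).im)) := by
  have hw₀ i : 0 < ‖w i‖ := norm_pos_iff.2 fun h => hu i (by simp [h])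
  have hu₀ : 0 < ‖u‖ := norm_pos_iff.2 fun h => hu (Classical.arbitrary ι) (by simp [h])
  simp only [re_mul_conj, im_mul_conj, mul_pos_iff_of_pos_left (mul_pos (hw₀ _) hu₀),
    mul_pos_iff_of_pos_left (mul_pos (hw₀ _) (hw₀ _))]
  refine exists_pivot_of_cos_ne_zero (fun i k hik => ?_) (fun i => ?_)
  · exact right_ne_zero_of_mul (by simpa only [im_mul_conj] using hw hik)
  · exact right_ne_zero_of_mul (by simpa only [re_mul_conj] using hu i)

def InOpenHalfPlane (v : ι → ℂ) : Prop := ∃ u : ℂ, ∀ i, 0 < (v i * conj u).re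

def signFlip {α : Type*} [Neg α] (p : ι → Bool) (v : ι → α) (i : ι) : α :=
  if p i then v i else -v i

lemma signFlip_eq_zero_iff {α : Type*} [AddGroup α] {p : ι → Bool}
    {v : ι → α} : signFlip p v = 0 ↔ v = 0 := by
  refine ⟨fun h => funext fun i => ?_, fun h => funext fun i => by simp [signFlip, h]⟩
  have := congrFun h i
  unfold signFlip at this
  split_ifs at this <;> simpa using this

lemma signFlip_mul_right {α : Type*} [Mul α] [HasDistribNeg α] (p : ι → Bool)
    (v a : ι → α) (i : ι) : signFlip p (fun i => v i * a i) i = signFlip p v i * a i := by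
  unfold signFlip
  split_ifs <;> simp

lemma pairwise_im_mul_conj_signFlip {w : ι → ℂ}
    (hw : Pairwise fun i k => (w i * conj (w k)).im ≠ 0) (p : ι → Bool) :
    Pairwise fun i k => (signFlip p w i * conj (signFlip p w k)).im ≠ 0 := by
  intro i k hik
  unfold signFlip
  split_ifs <;> simpa only [map_neg, neg_mul, mul_neg, neg_neg, neg_im, ne_eq, neg_eq_zero]
    using hw hik

open scoped Classical in
lemma card_filter_inOpenHalfPlane_signFlip_le [Fintype ι] [Nonempty ι] {w : ι → ℂ}
    (hw : Pairwise fun i k => (w i * conj (w k)).im ≠ 0) :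
    #{p : ι → Bool | InOpenHalfPlane (signFlip p w)} ≤ 2 * Fintype.card ι := by
  let pattern : ι × Bool → ι → Bool := fun kb i =>
    if i = kb.1 then kb.2 else decide (kb.2 = true ↔ 0 < (w i * conj (w kb.1)).im)
  calc #{p : ι → Bool | InOpenHalfPlane (signFlip p w)}
      ≤ #(univ.image pattern) := card_le_card fun p hp => ?_
    _ ≤ 2 * Fintype.card ι := card_image_le.trans (by simp [mul_comm])
  obtain ⟨u, hu⟩ := (mem_filter.1 hp).2
  have hsign i : (w i * conj u).re ≠ 0 ∧ (p i ↔ 0 < (w i * conj u).re) := by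
    have := hu i
    unfold signFlip at this
    by_cases h : p i
    · simp only [h, if_true] at this
      exact ⟨this.ne', iff_of_true h this⟩
    · simp only [h, Bool.false_eq_true, if_false, neg_mul, neg_re, neg_pos] at this
      exact ⟨this.ne, iff_of_false h this.not_gt⟩
  obtain ⟨k, hk⟩ := exists_pivot_re_mul_conj hw fun i => (hsign i).1
  refine mem_image.2 ⟨(k, p k), mem_univ _, funext fun i => ?_⟩
  by_cases hik : i = k
  · simp [pattern, hik]
  · have := hk i hik
    rw [← (hsign i).2, ← (hsign k).2] at this
    simp only [pattern, hik, if_false]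
    rw [Bool.eq_iff_iff, decide_eq_true_iff]
    exact this.symm

lemma exists_signFlip_forall_not_inOpenHalfPlane {κ : Type*} [Fintype ι] [Nonempty ι]
    [Fintype κ] {w : κ → ι → ℂ} (hw : ∀ j, Pairwise fun i k => (w j i * conj (w j k)).im ≠ 0)
    (hcard : Fintype.card κ * (2 * Fintype.card ι) < 2 ^ Fintype.card ι) :
    ∃ p : ι → Bool, ∀ j, ¬ InOpenHalfPlane (signFlip p (w j)) := by
  classical
  by_contra! h
  have hcover : (univ : Finset (ι → Bool)) ⊆
      univ.biUnion fun j => {p : ι → Bool | InOpenHalfPlane (signFlip p (w j))} := by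
    intro p _
    obtain ⟨j, hj⟩ := h p
    exact mem_biUnion.2 ⟨j, mem_univ j, mem_filter.2 ⟨mem_univ p, hj⟩⟩
  have := (card_le_card hcover).trans card_biUnion_le
  have := this.trans (sum_le_sum fun j _ => card_filter_inOpenHalfPlane_signFlip_le (hw j))
  simp only [card_univ, Fintype.card_pi, Fintype.card_bool, prod_const, sum_const,
    smul_eq_mul] at this
  omega

lemma LinearMap.exists_eq_re_mul_conj_of_ker_le {E : Type*} [AddCommGroup E] [Module ℝ E]
    {A : E →ₗ[ℝ] ℂ} {g : E →ₗ[ℝ] ℝ} (h : LinearMap.ker A ≤ LinearMap.ker g) :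
    ∃ u : ℂ, ∀ x, g x = (A x * conj u).re := by
  have hker : ⨅ i, LinearMap.ker (![reLm.comp A, imLm.comp A] i) ≤ LinearMap.ker g := by
    intro x hx
    simp only [Submodule.mem_iInf, Fin.forall_fin_two, LinearMap.mem_ker] at hx
    exact h (LinearMap.mem_ker.2 (Complex.ext (by simpa using hx.1) (by simpa using hx.2)))
  obtain ⟨c, hc⟩ :=
    (Submodule.mem_span_range_iff_exists_fun ℝ).1 (mem_span_of_iInf_ker_le_ker hker)
  refine ⟨⟨c 0, c 1⟩, fun x => ?_⟩
  rw [← hc]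
  simp [Fin.sum_univ_two, mul_re, mul_comm]

lemma Submodule.le_ker_of_forall_le {E : Type*} [AddCommGroup E] [Module ℝ E]
    {K : Submodule ℝ E} {f : E →ₗ[ℝ] ℝ} {s : ℝ} (h : ∀ x ∈ K, s ≤ f x) :
    K ≤ LinearMap.ker f := by
  intro x hx
  rw [LinearMap.mem_ker]
  by_contra hfx
  have := h (((s - 1) / f x) • x) (K.smul_mem _ hx)
  rw [map_smul, smul_eq_mul, div_mul_cancel₀ _ hfx] at this
  linarith

/-- Stiemke's alternative in `ℂ`, by separating the open positive orthant from the kernel of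
`r ↦ ∑ i, r i • v i`. -/
lemma exists_nonneg_re_mul_conj_of_forall_pos_sum_ne_zero [Fintype ι] {v : ι → ℂ}
    (h : ∀ r : ι → ℝ, (∀ i, 0 < r i) → ∑ i, r i • v i ≠ 0) :
    ∃ u : ℂ, (∀ i, 0 ≤ (v i * conj u).re) ∧ ∃ j, 0 < (v j * conj u).re := by
  classical
  let A : (ι → ℝ) →ₗ[ℝ] ℂ := Fintype.linearCombination ℝ v
  let P : Set (ι → ℝ) := Set.univ.pi fun _ => Set.Ioi 0
  have hdisj : Disjoint P (LinearMap.ker A) := Set.disjoint_left.2 fun r hr hA =>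
    h r (by simpa [P] using hr) (by simpa [A, Fintype.linearCombination_apply] using hA)
  obtain ⟨f, s, hfP, hfA⟩ := geometric_hahn_banach_open
    (convex_pi fun _ _ => convex_Ioi 0) (isOpen_set_pi Set.finite_univ fun _ _ => isOpen_Ioi)
    (LinearMap.ker A).convex hdisj
  have hker : LinearMap.ker A ≤ LinearMap.ker (f : (ι → ℝ) →ₗ[ℝ] ℝ) :=
    Submodule.le_ker_of_forall_le fun x hx => hfA x hx
  obtain ⟨u, hu⟩ := LinearMap.exists_eq_re_mul_conj_of_ker_le hker
  simp only [ContinuousLinearMap.coe_coe] at hu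
  have hs : s ≤ 0 := by simpa using hfA 0 (LinearMap.ker A).zero_mem
  have hclosure : closure P ⊆ {r | f r ≤ s} :=
    closure_minimal (fun r hr => (hfP r hr).le) (isClosed_le f.continuous continuous_const)
  refine ⟨-u, fun i => ?_, ?_⟩
  · have hi : Pi.single i 1 ∈ closure P := by
      rw [closure_pi_set]
      intro j _
      rw [closure_Ioi, Set.mem_Ici, Pi.single_apply]
      split_ifs <;> norm_num
    have := hclosure hi
    rw [Set.mem_ofPred_eq, hu, Fintype.linearCombination_apply_single, one_smul] at this
    rw [map_neg, mul_neg, neg_re]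
    linarith
  · have := hfP 1 fun _ _ => Set.mem_Ioi.2 one_pos
    rw [hu, Fintype.linearCombination_apply] at this
    simp only [Pi.one_apply, one_smul, Finset.sum_mul, re_sum] at this
    by_contra! hneg
    simp only [map_neg, mul_neg, neg_re, neg_nonpos] at hneg
    linarith [Finset.sum_nonneg (s := univ) fun i _ => hneg i]

lemma inOpenHalfPlane_of_nonneg [Finite ι] {v : ι → ℂ}
    (hv : Pairwise fun i k => (v i * conj (v k)).im ≠ 0) {u : ℂ}
    (hu : ∀ i, 0 ≤ (v i * conj u).re) {j : ι} (hj : 0 < (v j * conj u).re) :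
    InOpenHalfPlane v := by
  by_cases hall : ∀ i, 0 < (v i * conj u).re
  · exact ⟨u, hall⟩
  obtain ⟨k, hk⟩ := not_forall.1 hall
  have hk₀ : (v k * conj u).re = 0 := le_antisymm (not_lt.1 hk) (hu k)
  have hu₀ : u ≠ 0 := by rintro rfl; simp at hj
  have hjk : j ≠ k := by rintro rfl; exact hk hj
  have hb : (v k * conj u).im ≠ 0 := fun hb => by
    have hvk : v k = 0 := by simpa [hu₀] using (Complex.ext hk₀ hb : v k * conj u = 0)
    exact hv hjk (by simp [hvk])
  -- Rotating `u` slightly, in the direction given by the sign of `(v k * conj u).im`, makes the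
  -- one vanishing term positive and keeps the others positive.
  have hev : ∀ᶠ τ in 𝓝[>] (0 : ℝ), ∀ i,
      0 < (v i * conj (u * (1 + ((τ * (v k * conj u).im : ℝ) : ℂ) * I))).re := by
    refine eventually_all.2 fun i => ?_
    simp only [re_mul_conj_mul_one_add_mul_I]
    by_cases hik : i = k
    · subst hik
      filter_upwards [self_mem_nhdsWithin] with τ hτ
      rw [hk₀, zero_add, mul_assoc]
      exact mul_pos hτ (mul_self_pos.2 hb)
    · have hi : 0 < (v i * conj u).re := (hu i).lt_of_ne' fun h =>
        hv hik (im_mul_conj_eq_zero_of_re_eq_zero h hk₀ hu₀)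
      refine nhdsWithin_le_nhds (ContinuousAt.eventually_lt continuousAt_const ?_ ?_)
      · fun_prop
      · simpa using hi
  obtain ⟨τ, hτ⟩ := hev.exists
  exact ⟨_, hτ⟩

lemma exists_pos_sum_smul_eq_zero_of_not_inOpenHalfPlane [Fintype ι] {v : ι → ℂ}
    (hv : Pairwise fun i k => (v i * conj (v k)).im ≠ 0) (h : ¬ InOpenHalfPlane v) :
    ∃ r : ι → ℝ, (∀ i, 0 < r i) ∧ ∑ i, r i • v i = 0 := by
  by_contra! hr
  obtain ⟨u, hu, j, hj⟩ := exists_nonneg_re_mul_conj_of_forall_pos_sum_ne_zero hr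
  exact h (inOpenHalfPlane_of_nonneg hv hu hj)

lemma exists_rowScaling_pairwise_im_ne_zero {n : ℕ} {κ : Type*} [Countable κ]
    (Θ : Matrix (Fin n) κ ℂ) (hΘ : ∀ i j, Θ i j ≠ 0) :
    ∃ c : Fin n → ℂ, (∀ i, c i ≠ 0) ∧
      ∀ j, Pairwise fun i k => (c i * Θ i j * conj (c k * Θ k j)).im ≠ 0 := by
  set bad : Set ℝ := ⋃ (i : Fin n) (k : Fin n) (_ : i ≠ k) (j : κ),
    {t | (exp ((((i : ℝ) - k) * t : ℝ) * I) * (Θ i j * conj (Θ k j))).im = 0}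
  have hbad : bad.Countable := by
    refine Set.countable_iUnion fun i => Set.countable_iUnion fun k =>
      Set.countable_iUnion fun hik => Set.countable_iUnion fun j =>
        countable_setOf_im_exp_mul_eq_zero ?_ (mul_ne_zero (hΘ i j) ?_)
    · exact sub_ne_zero.2 (by exact_mod_cast Fin.val_ne_of_ne hik)
    · simpa using hΘ k j
  obtain ⟨t, ht⟩ := (hbad.dense_compl ℝ).nonempty
  refine ⟨fun i => exp (((i : ℝ) * t : ℝ) * I), fun i => exp_ne_zero _,
    fun j i k hik h => ?_⟩
  refine ht (Set.mem_iUnion₂.2 ⟨i, k, Set.mem_iUnion₂.2 ⟨hik, j, ?_⟩⟩)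
  rw [Set.mem_ofPred_eq, ← h, map_mul, ← exp_conj, mul_mul_mul_comm, ← exp_add]
  congr 3
  simp only [map_mul, conj_ofReal, conj_I]
  push_cast
  ring

lemma Matrix.rank_lt_card_height_of_vecMul_eq_zero {K m n : Type*} [Field K] [Fintype m]
    [Fintype n] {M : Matrix m n K} {y : m → K} (hy : y ≠ 0) (h : y ᵥ* M = 0) :
    M.rank < Fintype.card m := by
  have hrow : (replicateRow (Fin 1) y).rank = 1 := by
    simpa using (linearIndependent_unique_iff.2 hy :
      LinearIndependent K (replicateRow (Fin 1) y).row).rank_matrix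
  have := rank_add_rank_le_card_of_mul_eq_zero (B := M)
    (by rw [← replicateRow_vecMul, h, replicateRow_zero] : replicateRow (Fin 1) y * M = 0)
  omega

lemma pos_and_mul_two_mul_lt_two_pow {n m : ℕ} (hm : (m : ℝ) < 2 ^ (n - 1) / n) :
    0 < n ∧ m * (2 * n) < 2 ^ n := by
  obtain _ | n := n
  · simp only [zero_tsub, pow_zero, CharP.cast_eq_zero, div_zero] at hm
    linarith [(m.cast_nonneg : (0 : ℝ) ≤ m)]
  refine ⟨n.succ_pos, ?_⟩
  rw [lt_div_iff₀ (by positivity)] at hm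
  have : m * (n + 1) < 2 ^ n := by exact_mod_cast hm
  rw [pow_succ]
  linarith

theorem phaseRank_lt_of_lt_two_pow_general {n m : ℕ}
    (hm : (m : ℝ) < 2 ^ (n - 1) / n)
    (Θ : Matrix (Fin n) (Fin m) ℂ) (hphase : ∀ i j, ‖Θ i j‖ = 1) :
    phaseRank Θ < n ∧
      ∃ M : Matrix (Fin n) (Fin m) ℂ, M.rank < n ∧ (∀ i j, M i j ≠ 0) ∧
        (∀ i j, M i j / ‖M i j‖ = Θ i j) := by
  obtain ⟨hn, hcard⟩ := pos_and_mul_two_mul_lt_two_pow hm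
  have : Nonempty (Fin n) := ⟨⟨0, hn⟩⟩
  have hΘ i j : Θ i j ≠ 0 := norm_ne_zero_iff.1 (by simp [hphase])
  obtain ⟨c, hc, hw⟩ := exists_rowScaling_pairwise_im_ne_zero Θ hΘ
  obtain ⟨p, hp⟩ := exists_signFlip_forall_not_inOpenHalfPlane (w := fun j i => c i * Θ i j) hw
    (by simpa using hcard)
  choose r hr hsum using fun j =>
    exists_pos_sum_smul_eq_zero_of_not_inOpenHalfPlane (pairwise_im_mul_conj_signFlip (hw j) p)
      (hp j)
  let M : Matrix (Fin n) (Fin m) ℂ := .of fun i j => r j i * Θ i j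
  have hy : signFlip p c ≠ 0 := fun h => hc ⟨0, hn⟩ (congrFun (signFlip_eq_zero_iff.1 h) _)
  have hyM : signFlip p c ᵥ* M = 0 := funext fun j => by
    rw [Pi.zero_apply, ← hsum j, vecMul, dotProduct]
    refine sum_congr rfl fun i _ => ?_
    rw [signFlip_mul_right p c (Θ · j), real_smul, mul_left_comm]
    rfl
  have hM : M.rank < n := by simpa using Matrix.rank_lt_card_height_of_vecMul_eq_zero hy hyM
  have hMphase i j : M i j / ‖M i j‖ = Θ i j := ofReal_mul_div_norm (hr j i) (hphase i j)
  have hM₀ i j : M i j ≠ 0 := mul_ne_zero (ofReal_ne_zero.2 (hr j i).ne') (hΘ i j)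
  have hle : phaseRank Θ ≤ M.rank := Nat.sInf_le ⟨M, hM₀, hMphase, rfl⟩
  exact ⟨hle.trans_lt hM, M, hM, hM₀, hMphase⟩

/-- If `n ≤ m < 2^{n-1}/n`, then every `n × m` phase matrix has nonmaximal phase rank:
there is a complex matrix of rank less than `n` with all entries nonzero and the same
entrywise phases. -/
theorem phaseRank_lt_of_lt_two_pow {n m : ℕ} (hnm : n ≤ m)
    (hm : (m : ℝ) < 2 ^ (n - 1) / n)
    (Θ : Matrix (Fin n) (Fin m) ℂ) (hphase : ∀ i j, ‖Θ i j‖ = 1) :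
    phaseRank Θ < n ∧
      ∃ M : Matrix (Fin n) (Fin m) ℂ, M.rank < n ∧ (∀ i j, M i j ≠ 0) ∧
        (∀ i j, M i j / ‖M i j‖ = Θ i j) :=
  phaseRank_lt_of_lt_two_pow_general hm Θ hphase
end

section
/- Let Θ be an n×m phase matrix and let N be any complex n×m matrix satisfying N_ij/|N_ij| = Θ_ij and |N_ij| ≥ 1 for all i,j. Then rank_phase(Θ) ≥ √(nm)/‖N‖, where ‖N‖ is the spectral norm of N. (Taking the infimum over such N gives the bound rank_phase(Θ) ≥ √(nm)/‖Θ‖*, which improves the bound with the spectral norm of Θ itself.) -/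
/-- The spectral norm (ℓ² → ℓ² operator norm) of a complex matrix. -/
noncomputable def matSpectralNorm {n m : ℕ} (A : Matrix (Fin n) (Fin m) ℂ) : ℝ :=
  ‖LinearMap.toContinuousLinearMap (Matrix.toEuclideanLin A)‖

open Finset Real Filter
open scoped Matrix Matrix.Norms.L2Operator ComplexConjugate

theorem norm_le_abs_sum_add_of_forall_le {κ : Type*} [Fintype κ] (v : κ → ℝ) {k : κ}
    (hk : ∀ j, v j ≤ v k) : ‖v‖ ≤ |∑ j, v j| + (Fintype.card κ * v k - ∑ j, v j) := by
  set m : ℝ := (Fintype.card κ : ℝ)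
  set s := ∑ j, v j
  have hspread : ∀ l, v k - v l ≤ m * v k - s := fun l => by
    have : m * v k - s = ∑ j, (v k - v j) := by simp [m, s, sum_sub_distrib]
    rw [this]
    exact single_le_sum (f := fun j => v k - v j) (fun j _ => sub_nonneg.mpr (hk j)) (mem_univ l)
  have hm : 1 ≤ m := by simp only [m, Nat.one_le_cast]; exact Fintype.card_pos_iff.mpr ⟨k⟩
  have hs : s ≤ m * v k := by simpa [m, s] using sum_le_sum fun j (_ : j ∈ univ) => hk j
  have hX : 0 ≤ m * v k - s := sub_nonneg.mpr hs
  have hupper : v k ≤ |s| + (m * v k - s) := by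
    nlinarith [le_abs_self s, mul_le_mul_of_nonneg_right hm (add_nonneg (abs_nonneg s) hX)]
  have hlower : -|s| ≤ v k := by
    nlinarith [neg_abs_le s, mul_le_mul_of_nonneg_right hm (abs_nonneg s)]
  refine pi_norm_le_iff_of_nonneg (by positivity) |>.mpr fun l => abs_le.mpr ⟨?_, ?_⟩
  · linarith [hspread l]
  · linarith [hk l]

theorem norm_sum_mul_sq_le {κ 𝕜 : Type*} [RCLike 𝕜] [Fintype κ] (a y : κ → 𝕜) :
    ‖∑ j, a j * y j‖ ^ 2 ≤ (∑ j, ‖a j‖) * ∑ j, ‖a j‖ * ‖y j‖ ^ 2 := by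
  calc ‖∑ j, a j * y j‖ ^ 2 ≤ (∑ j, ‖a j‖ * ‖y j‖) ^ 2 := by
        gcongr
        exact (norm_sum_le _ _).trans_eq (by simp only [norm_mul])
    _ ≤ _ := sum_sq_le_sum_mul_sum_of_sq_le_mul _ (fun _ _ => norm_nonneg _)
        (fun _ _ => by positivity) (fun _ _ => le_of_eq (by ring))

section Scaling

variable {ι κ : Type*} [Fintype ι] [Fintype κ]

noncomputable def expRowSum (a : Matrix ι κ ℝ) (v : κ → ℝ) (i : ι) : ℝ :=
  ∑ j, a i j * exp (v j)

/-- Setting `x_i := card κ / expRowSum a v i` makes the rows of `x_i a_ij exp v_j` sum to `card κ`;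
the columns sum to `card ι` exactly at the critical points of this potential. The square term
removes the invariance under `v ↦ v + c` and vanishes at critical points. -/
noncomputable def scalingPotential (a : Matrix ι κ ℝ) (v : κ → ℝ) : ℝ :=
  Fintype.card κ * ∑ i, log (expRowSum a v i) - Fintype.card ι * ∑ j, v j + (∑ j, v j) ^ 2

variable [Nonempty κ] {a : Matrix ι κ ℝ}

omit [Fintype ι] in
theorem expRowSum_pos (ha : ∀ i j, 0 < a i j) (v : κ → ℝ) (i : ι) : 0 < expRowSum a v i :=
  sum_pos (fun j _ => mul_pos (ha i j) (exp_pos _)) univ_nonempty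

theorem continuous_scalingPotential (ha : ∀ i j, 0 < a i j) :
    Continuous (scalingPotential a) := by
  have hS : ∀ i, Continuous fun v => expRowSum a v i := fun i => by
    unfold expRowSum; fun_prop
  unfold scalingPotential
  exact ((continuous_const.mul (continuous_finsetSum _ fun i _ =>
    (hS i).log fun v => (expRowSum_pos ha v i).ne')).sub (by fun_prop)).add (by fun_prop)

theorem hasDerivAt_scalingPotential_line (ha : ∀ i j, 0 < a i j) (v d : κ → ℝ) :
    HasDerivAt (fun t : ℝ => scalingPotential a (v + t • d))
      (Fintype.card κ * ∑ i, (∑ j, a i j * exp (v j) * d j) / expRowSum a v i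
        - Fintype.card ι * ∑ j, d j + 2 * (∑ j, v j) * ∑ j, d j) 0 := by
  have hS : ∀ i, HasDerivAt (fun t : ℝ => expRowSum a (v + t • d) i)
      (∑ j, a i j * exp (v j) * d j) 0 := fun i => by
    refine HasDerivAt.fun_sum fun j _ => ?_
    refine ((((hasDerivAt_id (0 : ℝ)).mul_const (d j)).const_add (v j)).exp.const_mul
      (a i j)).congr_deriv ?_
    simp only [id, zero_mul, add_zero]
    ring
  have hsum : HasDerivAt (fun t : ℝ => ∑ j, (v + t • d) j) (∑ j, d j) 0 := by
    refine HasDerivAt.fun_sum fun j _ => ?_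
    simpa using ((hasDerivAt_id (0 : ℝ)).mul_const (d j)).const_add (v j)
  have hlog := HasDerivAt.fun_sum fun i (_ : i ∈ univ) =>
    (hS i).log (by simpa using (expRowSum_pos ha v i).ne')
  refine (((hlog.const_mul (Fintype.card κ : ℝ)).sub
    (hsum.const_mul (Fintype.card ι : ℝ))).add (hsum.pow 2)).congr_deriv ?_
  simp only [zero_smul, add_zero]
  ring

theorem exists_add_le_scalingPotential [Nonempty ι] (ha : ∀ i j, 0 < a i j) :
    ∃ C, ∀ v, ‖v‖ + C ≤ scalingPotential a v := by
  obtain ⟨p, -, hp⟩ := exists_min_image univ (fun p : ι × κ => a p.1 p.2) univ_nonempty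
  set n : ℝ := (Fintype.card ι : ℝ)
  set m : ℝ := (Fintype.card κ : ℝ)
  refine ⟨n * m * log (a p.1 p.2) - 1, fun v => ?_⟩
  obtain ⟨k, hk⟩ := Finite.exists_max v
  set s := ∑ j, v j
  have hlog : ∀ i, log (a p.1 p.2) + v k ≤ log (expRowSum a v i) := fun i => by
    rw [← log_exp (v k), ← log_mul (ha _ _).ne' (exp_pos _).ne']
    refine log_le_log (by have := ha p.1 p.2; positivity) ?_
    calc a p.1 p.2 * exp (v k) ≤ a i k * exp (v k) := by gcongr; exact hp (i, k) (mem_univ _)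
      _ ≤ expRowSum a v i := single_le_sum (f := fun j => a i j * exp (v j))
          (fun j _ => (mul_pos (ha i j) (exp_pos _)).le) (mem_univ k)
  have hsum : n * (log (a p.1 p.2) + v k) ≤ ∑ i, log (expRowSum a v i) := by
    simpa [n, mul_add] using sum_le_sum fun i (_ : i ∈ univ) => hlog i
  have hn : 1 ≤ n := by simp only [n, Nat.one_le_cast]; exact Fintype.card_pos
  have hX : 0 ≤ m * v k - s :=
    sub_nonneg.mpr (by simpa [m, s] using sum_le_sum fun j (_ : j ∈ univ) => hk j)
  have hnorm := norm_le_abs_sum_add_of_forall_le v hk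
  -- `scalingPotential a v ≥ n m log α + n (m v_k - ∑ v) + (∑ v)²`, where `v_k = max v`
  unfold scalingPotential
  nlinarith [mul_le_mul_of_nonneg_left hsum (by positivity : (0 : ℝ) ≤ m),
    mul_le_mul_of_nonneg_right hn hX, sq_abs s, sq_nonneg (|s| - 1)]

theorem exists_forall_scalingPotential_le [Nonempty ι] (ha : ∀ i j, 0 < a i j) :
    ∃ v, ∀ w, scalingPotential a v ≤ scalingPotential a w := by
  obtain ⟨C, hC⟩ := exists_add_le_scalingPotential ha
  exact (continuous_scalingPotential ha).exists_forall_le <| tendsto_atTop_mono hC <|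
    tendsto_atTop_add_const_right _ C tendsto_norm_cocompact_atTop

theorem exists_pos_scaling_sum_eq_card [Nonempty ι] (ha : ∀ i j, 0 < a i j) :
    ∃ x : ι → ℝ, ∃ y : κ → ℝ, (∀ i, 0 < x i) ∧ (∀ j, 0 < y j) ∧
      (∀ i, ∑ j, x i * a i j * y j = Fintype.card κ) ∧
      ∀ j, ∑ i, x i * a i j * y j = Fintype.card ι := by
  classical
  obtain ⟨v, hv⟩ := exists_forall_scalingPotential_le ha
  have hcrit : ∀ d : κ → ℝ,
      Fintype.card κ * ∑ i, (∑ j, a i j * exp (v j) * d j) / expRowSum a v i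
        - Fintype.card ι * ∑ j, d j + 2 * (∑ j, v j) * ∑ j, d j = 0 := fun d =>
    IsLocalMin.hasDerivAt_eq_zero (Eventually.of_forall fun t => by simpa using hv (v + t • d))
      (hasDerivAt_scalingPotential_line ha v d)
  have hS : ∀ i, expRowSum a v i ≠ 0 := fun i => (expRowSum_pos ha v i).ne'
  -- The direction `1` shows `∑ v = 0`; the direction `Pi.single j 1` then gives column `j`.
  have hsum : ∑ j, v j = 0 := by
    have h := hcrit 1
    have hone : ∀ i, (∑ j, a i j * exp (v j)) / expRowSum a v i = 1 := fun i => div_self (hS i)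
    simp only [Pi.one_apply, mul_one, hone, sum_const, card_univ, nsmul_eq_mul] at h
    have : (0 : ℝ) < Fintype.card κ := by exact_mod_cast Fintype.card_pos
    nlinarith
  refine ⟨fun i => Fintype.card κ / expRowSum a v i, fun j => exp (v j),
    fun i => div_pos (by exact_mod_cast Fintype.card_pos) (expRowSum_pos ha v i),
    fun j => exp_pos _, fun i => ?_, fun j => ?_⟩
  · simp_rw [mul_assoc, ← mul_sum]
    exact div_mul_cancel₀ _ (hS i)
  · have h := hcrit (Pi.single j 1)
    simp only [mul_ite, mul_one, mul_zero, Pi.single_apply, sum_ite_eq', mem_univ, if_true,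
      hsum] at h
    rw [mul_sum] at h
    calc _ = ∑ i, Fintype.card κ * (a i j * exp (v j) / expRowSum a v i) :=
          sum_congr rfl fun i _ => by ring
      _ = _ := by linarith

end Scaling

theorem Complex.norm_mul_div_norm (z : ℂ) : ‖z‖ * (z / ‖z‖) = z := by
  rcases eq_or_ne z 0 with rfl | hz
  · simp
  · exact mul_div_cancel₀ _ (by simpa using hz)

theorem Complex.conj_mul_eq_of_div_norm_eq {x y : ℂ} (h : x / ‖x‖ = y / ‖y‖) :
    conj x * y = ‖x‖ * ‖y‖ := by
  rcases eq_or_ne y 0 with rfl | hy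
  · simp
  set u := y / ‖y‖
  have hu : conj u * u = 1 := by
    rw [← Complex.normSq_eq_conj_mul_self, Complex.normSq_eq_norm_sq, norm_div]
    simp [hy]
  calc conj x * y = conj (‖x‖ * u) * (‖y‖ * u) := by
        rw [← h, Complex.norm_mul_div_norm, h, Complex.norm_mul_div_norm]
    _ = ‖x‖ * ‖y‖ * (conj u * u) := by simp only [map_mul, Complex.conj_ofReal]; ring
    _ = ‖x‖ * ‖y‖ := by rw [hu, mul_one]

theorem Complex.div_norm_ofReal_mul {r : ℝ} (hr : 0 < r) (z : ℂ) :
    (r * z) / ‖(r : ℂ) * z‖ = z / ‖z‖ := by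
  rw [norm_mul, Complex.norm_real, Real.norm_of_nonneg hr.le, Complex.ofReal_mul,
    mul_div_mul_left _ _ (by exact_mod_cast hr.ne')]

namespace Matrix

variable {ι κ 𝕜 : Type*} [RCLike 𝕜] [Fintype ι] [Fintype κ]

theorem l2_opNorm_le_sqrt_of_sum_norm_le [DecidableEq κ] (A : Matrix ι κ 𝕜) {ρ₁ ρ₂ : ℝ}
    (hρ₁ : 0 ≤ ρ₁) (hrow : ∀ i, ∑ j, ‖A i j‖ ≤ ρ₁) (hcol : ∀ j, ∑ i, ‖A i j‖ ≤ ρ₂) :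
    ‖A‖ ≤ √(ρ₁ * ρ₂) := by
  rw [l2_opNorm_def]
  refine ContinuousLinearMap.opNorm_le_bound _ (Real.sqrt_nonneg _) fun x => ?_
  rw [← Real.sqrt_sq (norm_nonneg x), ← Real.sqrt_mul' _ (sq_nonneg _)]
  refine Real.le_sqrt_of_sq_le ?_
  simp only [LinearEquiv.trans_apply, LinearMap.coe_toContinuousLinearMap', toLpLin_apply,
    EuclideanSpace.norm_sq_eq, mulVec, dotProduct]
  calc ∑ i, ‖∑ j, A i j * x j‖ ^ 2 ≤ ∑ i, ρ₁ * ∑ j, ‖A i j‖ * ‖x j‖ ^ 2 :=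
        sum_le_sum fun i _ => (norm_sum_mul_sq_le _ _).trans
          (mul_le_mul_of_nonneg_right (hrow i) (by positivity))
    _ = ρ₁ * ∑ j, (∑ i, ‖A i j‖) * ‖x j‖ ^ 2 := by
        rw [← mul_sum, sum_comm]; simp only [sum_mul]
    _ ≤ ρ₁ * ∑ j, ρ₂ * ‖x j‖ ^ 2 := by gcongr with j; exact hcol j
    _ = ρ₁ * ρ₂ * ∑ j, ‖x j‖ ^ 2 := by rw [← mul_sum, mul_assoc]

theorem norm_apply_le_l2_opNorm [DecidableEq κ] (A : Matrix ι κ 𝕜) (i : ι) (j : κ) :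
    ‖A i j‖ ≤ ‖A‖ := by
  calc ‖A i j‖ = ‖(EuclideanSpace.equiv ι 𝕜).symm (A *ᵥ EuclideanSpace.single j 1) i‖ := by
        simp [mulVec_single]
    _ ≤ ‖(EuclideanSpace.equiv ι 𝕜).symm (A *ᵥ EuclideanSpace.single j 1)‖ :=
        PiLp.norm_apply_le _ _
    _ ≤ ‖A‖ * ‖EuclideanSpace.single j (1 : 𝕜)‖ := l2_opNorm_mulVec _ _
    _ = ‖A‖ := by simp

theorem l2_opNorm_le_one_of_conjTranspose_mul_self_eq_one [DecidableEq κ] {A : Matrix ι κ 𝕜}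
    (hA : Aᴴ * A = 1) : ‖A‖ ≤ 1 := by
  have h : ‖A‖ * ‖A‖ ≤ 1 := by
    rw [← l2_opNorm_conjTranspose_mul_self, hA, ← diagonal_one, l2_opNorm_diagonal]
    exact pi_norm_le_iff_of_nonneg zero_le_one |>.mpr fun _ => by simp
  nlinarith [norm_nonneg A]

theorem rank_eq_finrank_range_toEuclideanLin [DecidableEq κ] (R : Matrix ι κ 𝕜) :
    R.rank = Module.finrank 𝕜 (LinearMap.range (toEuclideanLin R)) := by
  rw [toEuclideanLin_eq_toLin_orthonormal]
  exact rank_eq_finrank_range_toLin _ _ _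

theorem exists_conjTranspose_mul_self_eq_one_mul_conjTranspose_mul_eq [DecidableEq κ]
    (R : Matrix ι κ 𝕜) : ∃ A : Matrix ι (Fin R.rank) 𝕜, Aᴴ * A = 1 ∧ A * Aᴴ * R = R := by
  set W := LinearMap.range (toEuclideanLin R)
  let b := (stdOrthonormalBasis 𝕜 W).reindex
    (finCongr (rank_eq_finrank_range_toEuclideanLin R).symm)
  refine ⟨of fun i k => (b k : EuclideanSpace 𝕜 ι) i, ?_, ?_⟩
  · ext k l
    have := orthonormal_iff_ite.mp b.orthonormal k l
    rw [Submodule.coe_inner, PiLp.inner_apply] at this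
    rw [mul_apply, one_apply]
    simpa [mul_comm] using this
  · ext i j
    have hcol : WithLp.toLp 2 (fun i => R i j) ∈ W :=
      ⟨WithLp.toLp 2 (Pi.single j 1), by ext i; simp [toLpLin_apply]⟩
    have := congrArg (fun x : W => (x : EuclideanSpace 𝕜 ι) i) (b.sum_repr' ⟨_, hcol⟩)
    simp only [Submodule.coe_inner, Submodule.coe_sum, Submodule.coe_smul,
      PiLp.inner_apply] at this
    rw [← this]
    simp [mul_apply, mul_sum, mul_comm, mul_left_comm, sum_comm (γ := ι)]

theorem norm_trace_conjTranspose_mul_le [DecidableEq ι] [DecidableEq κ] (N R : Matrix ι κ 𝕜) :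
    ‖(Nᴴ * R).trace‖ ≤ R.rank * (‖N‖ * ‖R‖) := by
  obtain ⟨A, hA, hAR⟩ := exists_conjTranspose_mul_self_eq_one_mul_conjTranspose_mul_eq R
  have hA1 := l2_opNorm_le_one_of_conjTranspose_mul_self_eq_one hA
  set P := Aᴴ * R * Nᴴ * A
  have htrace : (Nᴴ * R).trace = P.trace := calc
    _ = (Nᴴ * (A * (Aᴴ * R))).trace := by rw [← Matrix.mul_assoc A, hAR]
    _ = P.trace := by rw [← Matrix.mul_assoc, trace_mul_comm]; simp only [P, Matrix.mul_assoc]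
  have hP : ‖P‖ ≤ ‖N‖ * ‖R‖ := calc
    ‖P‖ ≤ ‖Aᴴ‖ * ‖R‖ * ‖Nᴴ‖ * ‖A‖ := by
      refine (l2_opNorm_mul _ _).trans ?_
      gcongr
      refine (l2_opNorm_mul _ _).trans ?_
      gcongr
      exact l2_opNorm_mul _ _
    _ ≤ 1 * ‖R‖ * ‖N‖ * 1 := by
      rw [l2_opNorm_conjTranspose, l2_opNorm_conjTranspose]
      gcongr
    _ = ‖N‖ * ‖R‖ := by ring
  calc ‖(Nᴴ * R).trace‖ = ‖∑ k, P k k‖ := by rw [htrace, trace]; rfl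
    _ ≤ ∑ k, ‖P k k‖ := norm_sum_le _ _
    _ ≤ ∑ _k : Fin R.rank, ‖N‖ * ‖R‖ :=
      sum_le_sum fun k _ => (norm_apply_le_l2_opNorm P k k).trans hP
    _ = R.rank * (‖N‖ * ‖R‖) := by simp

theorem exists_rank_le_div_norm_eq_sum_norm_eq_card [Nonempty ι] [Nonempty κ]
    (M : Matrix ι κ ℂ) (hM : ∀ i j, M i j ≠ 0) :
    ∃ R : Matrix ι κ ℂ, R.rank ≤ M.rank ∧ (∀ i j, R i j / ‖R i j‖ = M i j / ‖M i j‖) ∧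
      (∀ i, ∑ j, ‖R i j‖ = Fintype.card κ) ∧ ∀ j, ∑ i, ‖R i j‖ = Fintype.card ι := by
  classical
  obtain ⟨x, y, hx, hy, hrow, hcol⟩ := exists_pos_scaling_sum_eq_card
    (a := of fun i j => ‖M i j‖) fun i j => norm_pos_iff.mpr (hM i j)
  have hR : ∀ i j, (diagonal (fun i => (x i : ℂ)) * M * diagonal (fun j => (y j : ℂ))) i j
      = ((x i * y j : ℝ) : ℂ) * M i j := fun i j => by
    rw [mul_diagonal, diagonal_mul]; push_cast; ring
  have hnorm : ∀ i j, ‖((x i * y j : ℝ) : ℂ) * M i j‖ = x i * ‖M i j‖ * y j := fun i j => by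
    rw [norm_mul, Complex.norm_real, Real.norm_of_nonneg (mul_pos (hx i) (hy j)).le]; ring
  refine ⟨diagonal (fun i => (x i : ℂ)) * M * diagonal (fun j => (y j : ℂ)),
    (rank_mul_le_left _ _).trans (rank_mul_le_right _ _), fun i j => ?_, fun i => ?_,
    fun j => ?_⟩
  · rw [hR]; exact Complex.div_norm_ofReal_mul (mul_pos (hx i) (hy j)) _
  · simpa only [hR, hnorm, of_apply] using hrow i
  · simpa only [hR, hnorm, of_apply] using hcol j

theorem trace_conjTranspose_mul_of_div_norm_eq {N R : Matrix ι κ ℂ}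
    (h : ∀ i j, N i j / ‖N i j‖ = R i j / ‖R i j‖) :
    (Nᴴ * R).trace = ((∑ i, ∑ j, ‖N i j‖ * ‖R i j‖ : ℝ) : ℂ) := by
  push_cast
  simp only [trace, diag, mul_apply, conjTranspose_apply, RCLike.star_def,
    Complex.conj_mul_eq_of_div_norm_eq (h _ _)]
  exact sum_comm

theorem sqrt_card_mul_card_le_rank_mul_l2_opNorm [Nonempty ι] [Nonempty κ] [DecidableEq κ]
    {M N : Matrix ι κ ℂ} (hM : ∀ i j, M i j ≠ 0)
    (hMN : ∀ i j, N i j / ‖N i j‖ = M i j / ‖M i j‖) (hN : ∀ i j, 1 ≤ ‖N i j‖) :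
    √(Fintype.card ι * Fintype.card κ) ≤ M.rank * ‖N‖ := by
  classical
  obtain ⟨R, hrank, hRM, hrow, hcol⟩ := exists_rank_le_div_norm_eq_sum_norm_eq_card M hM
  set n : ℝ := (Fintype.card ι : ℝ)
  set m : ℝ := (Fintype.card κ : ℝ)
  have hRnorm : ‖R‖ ≤ √(n * m) := by
    rw [mul_comm]
    exact l2_opNorm_le_sqrt_of_sum_norm_le R (by positivity) (fun i => (hrow i).le)
      fun j => (hcol j).le
  have htrace : n * m ≤ ‖(Nᴴ * R).trace‖ := by
    rw [trace_conjTranspose_mul_of_div_norm_eq fun i j => (hMN i j).trans (hRM i j).symm,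
      Complex.norm_real, Real.norm_eq_abs]
    calc n * m = ∑ i, ∑ j, ‖R i j‖ := by simp [hrow, n, m]
      _ ≤ ∑ i, ∑ j, ‖N i j‖ * ‖R i j‖ := by
        gcongr with i _ j _; exact le_mul_of_one_le_left (norm_nonneg _) (hN i j)
      _ ≤ _ := le_abs_self _
  have hnm : 0 < √(n * m) := Real.sqrt_pos.mpr (by positivity)
  have hrank' : (R.rank : ℝ) ≤ M.rank := by exact_mod_cast hrank
  refine le_of_mul_le_mul_right ?_ hnm
  calc √(n * m) * √(n * m) = n * m := Real.mul_self_sqrt (by positivity)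
    _ ≤ R.rank * (‖N‖ * ‖R‖) := htrace.trans (norm_trace_conjTranspose_mul_le N R)
    _ ≤ M.rank * (‖N‖ * √(n * m)) := by gcongr
    _ = M.rank * ‖N‖ * √(n * m) := by ring

end Matrix

theorem matSpectralNorm_eq_l2_opNorm {n m : ℕ} (A : Matrix (Fin n) (Fin m) ℂ) :
    matSpectralNorm A = ‖A‖ :=
  rfl

theorem exists_rank_eq_phaseRank {n m : ℕ} {Θ : Matrix (Fin n) (Fin m) ℂ}
    {M₀ : Matrix (Fin n) (Fin m) ℂ} (hM₀ : ∀ i j, M₀ i j ≠ 0)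
    (hM₀Θ : ∀ i j, M₀ i j / ‖M₀ i j‖ = Θ i j) :
    ∃ M : Matrix (Fin n) (Fin m) ℂ,
      (∀ i j, M i j ≠ 0) ∧ (∀ i j, M i j / ‖M i j‖ = Θ i j) ∧ M.rank = phaseRank Θ :=
  Nat.sInf_mem (s := {r | ∃ M : Matrix (Fin n) (Fin m) ℂ,
    (∀ i j, M i j ≠ 0) ∧ (∀ i j, M i j / ‖M i j‖ = Θ i j) ∧ M.rank = r}) ⟨_, M₀, hM₀, hM₀Θ, rfl⟩

theorem sqrt_div_spectralNorm_entrywise_ge_one_le_phaseRank_general {n m : ℕ}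
    (Θ : Matrix (Fin n) (Fin m) ℂ)
    (N : Matrix (Fin n) (Fin m) ℂ)
    (hN : ∀ i j, N i j / ‖N i j‖ = Θ i j)
    (hN1 : ∀ i j, 1 ≤ ‖N i j‖) :
    Real.sqrt (n * m) / matSpectralNorm N ≤ (phaseRank Θ : ℝ) := by
  rcases n.eq_zero_or_pos with rfl | hn
  · simp
  rcases m.eq_zero_or_pos with rfl | hm
  · simp
  have : Nonempty (Fin n) := ⟨⟨0, hn⟩⟩
  have : Nonempty (Fin m) := ⟨⟨0, hm⟩⟩
  have hN0 : ∀ i j, N i j ≠ 0 := fun i j => norm_pos_iff.mp (one_pos.trans_le (hN1 i j))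
  obtain ⟨M, hM0, hMΘ, hMrank⟩ := exists_rank_eq_phaseRank hN0 hN
  have hbound := Matrix.sqrt_card_mul_card_le_rank_mul_l2_opNorm hM0
    (fun i j => (hN i j).trans (hMΘ i j).symm) hN1
  rw [Fintype.card_fin, Fintype.card_fin, hMrank] at hbound
  rw [matSpectralNorm_eq_l2_opNorm]
  exact div_le_of_le_mul₀ (norm_nonneg _) (Nat.cast_nonneg _) hbound

/-- (Improved Forster-type bound.) If `N` has the same entrywise phases as the phase
matrix `Θ` and all its entries have modulus at least 1, then the phase rank of `Θ` is at
least `√(nm)/‖N‖`, where `‖N‖` is the spectral norm of `N`. -/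
theorem sqrt_div_spectralNorm_entrywise_ge_one_le_phaseRank {n m : ℕ}
    (Θ : Matrix (Fin n) (Fin m) ℂ) (hphase : ∀ i j, ‖Θ i j‖ = 1)
    (N : Matrix (Fin n) (Fin m) ℂ)
    (hN : ∀ i j, N i j / ‖N i j‖ = Θ i j)
    (hN1 : ∀ i j, 1 ≤ ‖N i j‖) :
    Real.sqrt (n * m) / matSpectralNorm N ≤ (phaseRank Θ : ℝ) :=
  sqrt_div_spectralNorm_entrywise_ge_one_le_phaseRank_general Θ N hN hN1
end

section
/- Let Θ be an n×m phase matrix with n ≤ m, and let k be the smallest positive integer such that m < 2^{k−1}/k. Then rank_phase(Θ) ≤ n − ⌊(n−1)/(k−1)⌋. -/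
/-!
Cut the rows into `⌊(n-1)/(k-1)⌋` windows of `k` consecutive rows, consecutive windows sharing
one row. In a `k × m` block of phases with `m k < 2^(k-1)`, rotating the rows by random phases
`e^{iβ_i}` leaves, with positive probability, no column whose `k` points lie in a closed
half-plane: for a fixed column and row `i`, all other points lie in the half-plane starting at
point `i` with probability `2^(1-k)`, and there are `m k` such pairs (the probability is
replaced by counting on a finite grid of rotations). A point set meeting no closed half-plane
has a vanishing combination with positive coefficients, so the block has moduli making its rows
linearly dependent with nonzero coefficients. Such dependencies survive rescaling columns by
positive factors, so the windows can be glued along their shared rows; the last row of each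
window is then in the span of the earlier rows.
-/

open Complex Finset
open scoped Real

theorem exists_pos_lt_pi_exp_mul_I_eq {x y : ℝ} (h : Real.sin (y - x) < 0) :
    ∃ d, 0 < d ∧ d < π ∧ exp (y * I) = exp (↑(x - d) * I) := by
  set n := toIcoDiv Real.two_pi_pos 0 (x - y)
  have hd : x - y - n • (2 * π) ∈ Set.Ico 0 (0 + 2 * π) :=
    toIcoMod_mem_Ico Real.two_pi_pos 0 (x - y)
  rw [zsmul_eq_mul, zero_add] at hd
  have hsin : 0 < Real.sin (x - y - n * (2 * π)) := by
    rw [Real.sin_sub_int_mul_two_pi, ← neg_sub, Real.sin_neg]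
    linarith
  refine ⟨x - y - n * (2 * π), ?_, ?_, exp_eq_exp_iff_exists_int.2 ⟨-n, ?_⟩⟩
  · refine hd.1.lt_of_ne fun h0 => ?_
    rw [← h0, Real.sin_zero] at hsin
    exact hsin.false
  · by_contra! hπ
    have := Real.sin_nonneg_of_nonneg_of_le_pi (x := x - y - n * (2 * π) - π) (by linarith)
      (by linarith [hd.2])
    rw [Real.sin_sub_pi] at this
    linarith
  · push_cast
    ring

theorem add_two_pi_le_of_exp_mul_I_eq {x y : ℝ} (hxy : x < y)
    (h : exp (x * I) = exp (y * I)) : x + 2 * π ≤ y := by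
  obtain ⟨n, hn⟩ := exp_eq_exp_iff_exists_int.1 h
  have him : x = y + n * (2 * π) := by simpa using congrArg im hn
  have hn0 : n < 0 := by
    have : (n : ℝ) < 0 := by nlinarith [Real.pi_pos]
    exact_mod_cast this
  have hn1 : (n : ℝ) ≤ -1 := by exact_mod_cast (by omega : n ≤ -1)
  nlinarith [Real.pi_pos]

theorem neg_exp_mem_hull_pair {θ a b : ℝ} (ha : 0 ≤ a) (haπ : a ≤ π) (hπb : π ≤ b)
    (hab : 0 < b - a) (hba : b - a < π) :
    -exp (θ * I) ∈ PointedCone.hull ℝ {exp (↑(θ - a) * I), exp (↑(θ - b) * I)} := by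
  have hs : 0 < Real.sin (b - a) := Real.sin_pos_of_pos_of_lt_pi hab hba
  have hsa : 0 ≤ Real.sin a := Real.sin_nonneg_of_nonneg_of_le_pi ha haπ
  have hsb : 0 ≤ -Real.sin b := by
    rw [← Real.sin_sub_pi]
    exact Real.sin_nonneg_of_nonneg_of_le_pi (by linarith) (by linarith)
  -- the coefficients come from `sin (b - a) - sin b e^{-ia} + sin a e^{-ib} = 0`
  refine Submodule.mem_span_pair.2 ⟨⟨-Real.sin b / Real.sin (b - a), by positivity⟩,
    ⟨Real.sin a / Real.sin (b - a), by positivity⟩, ?_⟩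
  have hs' : (Real.sin (b - a) : ℂ) ≠ 0 := ofReal_ne_zero.2 hs.ne'
  rw [Nonneg.mk_smul, Nonneg.mk_smul, real_smul, real_smul, ofReal_div, ofReal_div,
    div_mul_eq_mul_div, div_mul_eq_mul_div, ← add_div, div_eq_iff hs']
  simp only [exp_mul_I, ← ofReal_cos, ← ofReal_sin, Real.sin_sub, Real.cos_sub]
  push_cast
  ring

theorem neg_exp_mem_hull_range {ι : Type*} [Finite ι] {θ : ι → ℝ}
    (h : ∀ i, ∃ l, Real.sin (θ l - θ i) < 0) (i₀ : ι) :
    -exp (θ i₀ * I) ∈ PointedCone.hull ℝ (Set.range fun i => exp (θ i * I)) := by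
  choose f d hd0 hdπ hstep using fun i => (h i).imp fun _ => exists_pos_lt_pi_exp_mul_I_eq
  -- The walk `i₀, f i₀, f (f i₀), …` turns clockwise by angles in `(0, π)`, and `S t` is the
  -- angle swept in `t` steps. The walk revisits an index, so `S` passes `π`; at that step
  -- `-exp (θ i₀ * I)` lies between the two current points of the walk.
  set S : ℕ → ℝ := fun t => ∑ s ∈ range t, d (f^[s] i₀)
  have hS : ∀ t, S (t + 1) = S t + d (f^[t] i₀) := fun t => sum_range_succ _ _
  have hS0 : S 0 = 0 := sum_range_zero _
  have hwalk : ∀ t, exp (θ (f^[t] i₀) * I) = exp (↑(θ i₀ - S t) * I) := by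
    intro t
    induction t with
    | zero => simp [hS0]
    | succ t ih =>
      rw [Function.iterate_succ_apply', hstep, hS, ofReal_sub, sub_mul, exp_sub, ih, ← exp_sub]
      push_cast
      ring_nf
  have hmono : StrictMono S := strictMono_nat_of_lt_succ fun t => by
    rw [hS]
    linarith [hd0 (f^[t] i₀)]
  have hbig : ∃ T, π < S T := by
    obtain ⟨s, s', hne, heq⟩ := Finite.exists_ne_map_eq_of_infinite fun t => f^[t] i₀
    wlog hlt : s < s' generalizing s s'
    · exact this s' s hne.symm heq.symm (by omega)
    have hlap := add_two_pi_le_of_exp_mul_I_eq (x := θ i₀ - S s') (y := θ i₀ - S s)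
      (by linarith [hmono hlt]) (by rw [← hwalk, ← hwalk, heq])
    exact ⟨s', by linarith [hmono.monotone (Nat.zero_le s), Real.pi_pos]⟩
  obtain ⟨t, hle, hlt⟩ := Nat.exists_not_and_succ_of_not_zero_of_exists
    (by simp [hS0, Real.pi_nonneg]) hbig
  have hpair := neg_exp_mem_hull_pair (θ := θ i₀) (hS0 ▸ hmono.monotone (Nat.zero_le t))
    (not_lt.1 hle) hlt.le (by linarith [hmono (Nat.lt_succ_self t)])
    (by linarith [hS t, hdπ (f^[t] i₀)])
  refine Submodule.span_mono ?_ hpair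
  rintro _ (rfl | rfl)
  exacts [⟨f^[t] i₀, hwalk t⟩, ⟨f^[t + 1] i₀, hwalk (t + 1)⟩]

theorem exists_pos_sum_mul_exp_eq_zero {ι : Type*} [Fintype ι] {θ : ι → ℝ}
    (h : ∀ i, ∃ l, Real.sin (θ l - θ i) < 0) :
    ∃ r : ι → ℝ, (∀ i, 0 < r i) ∧ ∑ i, (r i : ℂ) * exp (θ i * I) = 0 := by
  have hneg : -∑ i, exp (θ i * I) ∈ PointedCone.hull ℝ (Set.range fun i => exp (θ i * I)) := by
    rw [← sum_neg_distrib]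
    exact Submodule.sum_mem _ fun i _ => neg_exp_mem_hull_range h i
  obtain ⟨q, hq⟩ := (Submodule.mem_span_range_iff_exists_fun _).1 hneg
  refine ⟨fun i => 1 + q i, fun i => add_pos_of_pos_of_nonneg one_pos (q i).2, ?_⟩
  simp only [← Nonneg.coe_smul, real_smul] at hq
  push_cast
  simp only [add_mul, one_mul, sum_add_distrib, hq, add_neg_cancel]

theorem exists_mul_succ_pow_lt {a e : ℕ} (h : a < 2 ^ e) :
    ∃ P : ℕ, 0 < P ∧ a * (P + 1) ^ e < (2 * P) ^ e := by
  have hlim : Filter.Tendsto (fun P : ℕ => (a : ℝ) * (1 + 1 / (P : ℝ)) ^ e) Filter.atTop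
      (nhds (a * (1 + 0) ^ e)) :=
    ((tendsto_const_nhds.add tendsto_one_div_atTop_nhds_zero_nat).pow e).const_mul _
  rw [add_zero, one_pow, mul_one] at hlim
  obtain ⟨P, hPa, hP⟩ := ((hlim.eventually_lt_const (by exact_mod_cast h : (a : ℝ) < 2 ^ e)).and
    (Filter.eventually_gt_atTop 0)).exists
  refine ⟨P, hP, ?_⟩
  have hP' : (0 : ℝ) < P := by exact_mod_cast hP
  rw [one_add_div hP'.ne', div_pow, ← mul_div_assoc, div_lt_iff₀ (by positivity)] at hPa
  exact_mod_cast (by rw [mul_pow]; exact hPa : (a : ℝ) * (P + 1) ^ e < (2 * P) ^ e)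

theorem floor_emod_le_of_sin_nonneg {P : ℕ} (hP : 0 < P) {y : ℝ}
    (h : 0 ≤ Real.sin (π * y / P)) : ⌊y⌋ % (2 * P : ℤ) ≤ P := by
  have hP' : (0 : ℝ) < P := by exact_mod_cast hP
  set r := ⌊y⌋ % (2 * P : ℤ)
  set q := ⌊y⌋ / (2 * P : ℤ)
  have hdiv : (r : ℝ) + 2 * P * q = ⌊y⌋ := by exact_mod_cast Int.emod_add_mul_ediv ⌊y⌋ (2 * P)
  have hr2 : (r : ℝ) + 1 ≤ 2 * P := by
    exact_mod_cast Int.emod_lt_of_pos ⌊y⌋ (by omega : (0 : ℤ) < 2 * P)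
  by_contra! hgt
  have hr1 : (P : ℝ) + 1 ≤ r := by exact_mod_cast hgt
  -- `u = y - 2 P q` lies in `(P, 2P)`, so the angle `π u / P` lies in `(π, 2π)`
  set u := y - 2 * P * q
  have hu1 : (P : ℝ) < u := by linarith [Int.floor_le y]
  have hu2 : u < 2 * P := by linarith [Int.lt_floor_add_one y]
  have hangle : π * y / P = π * (u - P) / P + π + q * (2 * π) := by
    simp only [u]
    field_simp
    ring
  rw [hangle, Real.sin_add_int_mul_two_pi, Real.sin_add_pi] at h
  have : 0 < Real.sin (π * (u - P) / P) := by
    apply Real.sin_pos_of_pos_of_lt_pi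
    · have : 0 < u - P := by linarith
      positivity
    · rw [div_lt_iff₀ hP']
      nlinarith [Real.pi_pos]
  linarith

theorem card_filter_sin_nonneg_le (P : ℕ) (c : ℝ) :
    #{s : Fin (2 * P) | 0 ≤ Real.sin (π * s / P + c)} ≤ P + 1 := by
  rcases P.eq_zero_or_pos with rfl | hP
  · simp
  set z := ⌊c * P / π⌋
  calc _ ≤ #(Icc (0 : ℤ) P) :=
        card_le_card_of_injOn (fun s : Fin (2 * P) => ((s : ℤ) + z) % (2 * P)) ?_ ?_
    _ = P + 1 := by simp
  · intro s hs
    replace hs := (mem_filter.1 hs).2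
    have hfloor : ⌊(s : ℝ) + c * P / π⌋ = s + z := Int.floor_natCast_add _ _
    have hy : π * ((s : ℝ) + c * P / π) / P = π * s / P + c := by field_simp
    rw [← hy] at hs
    rw [coe_Icc, Set.mem_Icc]
    refine ⟨Int.emod_nonneg _ (by omega), ?_⟩
    simpa only [hfloor] using floor_emod_le_of_sin_nonneg hP hs
  · intro s _ s' _ hss'
    have : (s : ℤ) ≡ s' [ZMOD (2 * P : ℕ)] := by
      refine Int.ModEq.add_right_cancel' z ?_
      push_cast
      exact hss'
    exact Fin.ext (Nat.ModEq.eq_of_lt_of_lt (Int.natCast_modEq_iff.1 this) s.2 s'.2)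

theorem card_filter_forall_ne_mem_le {ι α : Type*} [Fintype ι] [DecidableEq ι] [Fintype α]
    [DecidableEq α] (i : ι) (A : ι → α → Finset α) {b : ℕ} (hA : ∀ l v, #(A l v) ≤ b) :
    #{t : ι → α | ∀ l ≠ i, t l ∈ A l (t i)} ≤ Fintype.card α * b ^ (Fintype.card ι - 1) := by
  have hsub : ({t | ∀ l ≠ i, t l ∈ A l (t i)} : Finset (ι → α)) ⊆
      univ.biUnion fun v => Fintype.piFinset fun l => if l = i then {v} else A l v := by
    intro t ht
    simp only [mem_biUnion, mem_univ, true_and, Fintype.mem_piFinset]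
    refine ⟨t i, fun l => ?_⟩
    split_ifs with hl
    · exact hl ▸ mem_singleton_self _
    · exact (mem_filter.1 ht).2 l hl
  refine (card_le_card hsub).trans (card_biUnion_le.trans ?_)
  rw [← smul_eq_mul, ← card_univ, ← sum_const]
  refine sum_le_sum fun v _ => ?_
  rw [Fintype.card_piFinset, ← mul_prod_erase univ _ (mem_univ i), if_pos rfl, card_singleton,
    one_mul, ← card_univ, ← card_erase_of_mem (mem_univ i)]
  exact prod_le_pow_card _ _ _ fun l hl => by rw [if_neg (ne_of_mem_erase hl)]; exact hA l v

theorem exists_forall_exists_sin_neg {ι κ : Type*} [Fintype ι] [Fintype κ]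
    (h : Fintype.card κ * Fintype.card ι < 2 ^ (Fintype.card ι - 1)) (w : κ → ι → ℝ) :
    ∃ β : ι → ℝ, ∀ j i, ∃ l, Real.sin (β l + w j l - (β i + w j i)) < 0 := by
  classical
  obtain ⟨P, hP, hPe⟩ := exists_mul_succ_pow_lt h
  by_contra! hbad
  obtain ⟨e, he⟩ : ∃ e, Fintype.card ι = e + 1 :=
    let ⟨_, i, _⟩ := hbad 0
    Nat.exists_eq_add_one.2 (Fintype.card_pos_iff.2 ⟨i⟩)
  -- the grid points `β = π t / P` that fail at the column `j` and the index `i`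
  let arc (j : κ) (i l : ι) (v : Fin (2 * P)) : Finset (Fin (2 * P)) :=
    {s | 0 ≤ Real.sin (π * s / P + (w j l - (π * v / P + w j i)))}
  let bad (j : κ) (i : ι) : Finset (ι → Fin (2 * P)) := {t | ∀ l ≠ i, t l ∈ arc j i l (t i)}
  have hcover : univ ⊆ (univ : Finset (κ × ι)).biUnion fun p => bad p.1 p.2 := by
    intro t _
    obtain ⟨j, i, hji⟩ := hbad fun l => π * t l / P
    refine mem_biUnion.2 ⟨(j, i), mem_univ _,
      mem_filter.2 ⟨mem_univ _, fun l _ => mem_filter.2 ⟨mem_univ _, ?_⟩⟩⟩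
    simpa only [add_sub_assoc] using hji l
  have hcount : (2 * P) ^ (e + 1) ≤ Fintype.card κ * Fintype.card ι * (2 * P * (P + 1) ^ e) := by
    calc (2 * P) ^ (e + 1) = #(univ : Finset (ι → Fin (2 * P))) := by simp [he]
      _ ≤ ∑ p : κ × ι, #(bad p.1 p.2) := (card_le_card hcover).trans card_biUnion_le
      _ ≤ ∑ _p : κ × ι, 2 * P * (P + 1) ^ e := sum_le_sum fun p _ => by
        simpa [he] using card_filter_forall_ne_mem_le p.2 (arc p.1 p.2) fun l v =>
          card_filter_sin_nonneg_le P _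
      _ = _ := by simp
  rw [he, Nat.add_sub_cancel] at hPe
  rw [he, pow_succ] at hcount
  nlinarith [Nat.mul_lt_mul_of_pos_right hPe (by omega : 0 < 2 * P)]

theorem exists_sum_mul_eq_zero_of_norm_eq_one {ι κ : Type*} [Fintype ι] [Fintype κ]
    (h : Fintype.card κ * Fintype.card ι < 2 ^ (Fintype.card ι - 1))
    (Θ : ι → κ → ℂ) (hΘ : ∀ i j, ‖Θ i j‖ = 1) :
    ∃ (c : ι → ℂ) (r : ι → κ → ℝ), (∀ i, c i ≠ 0) ∧ (∀ i j, 0 < r i j) ∧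
      ∀ j, ∑ i, c i * (r i j * Θ i j) = 0 := by
  obtain ⟨β, hβ⟩ := exists_forall_exists_sin_neg h fun j i => arg (Θ i j)
  choose r hr hsum using fun j =>
    exists_pos_sum_mul_exp_eq_zero (θ := fun i => β i + arg (Θ i j)) (hβ j)
  refine ⟨fun i => exp (β i * I), fun i j => r j i, fun i => exp_ne_zero _, fun i j => hr j i,
    fun j => ?_⟩
  rw [← hsum j]
  refine sum_congr rfl fun i _ => ?_
  nth_rw 1 [← norm_mul_exp_arg_mul_I (Θ i j)]
  rw [hΘ i j, ofReal_add, add_mul, exp_add]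
  push_cast
  ring

theorem mem_span_image_Iic_diff {R V ι : Type*} [Semiring R] [AddCommMonoid V] [Module R V]
    [Preorder ι] [WellFoundedLT ι] {v : ι → V} {E : Set ι}
    (hE : ∀ e ∈ E, v e ∈ Submodule.span R (v '' Set.Iio e)) (i : ι) :
    v i ∈ Submodule.span R (v '' (Set.Iic i \ E)) := by
  induction i using WellFoundedLT.induction with
  | _ i ih =>
    by_cases hi : i ∈ E
    · refine Submodule.span_le.2 ?_ (hE i hi)
      rintro _ ⟨j, hj, rfl⟩
      refine Submodule.span_mono (Set.image_mono ?_) (ih j hj)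
      exact Set.sdiff_subset_sdiff_left (Set.Iic_subset_Iic.2 hj.le)
    · exact Submodule.subset_span ⟨i, ⟨le_rfl, hi⟩, rfl⟩

theorem mem_span_range_castSucc_of_sum_smul_eq_zero {K V : Type*} [DivisionRing K]
    [AddCommGroup V] [Module K V] {p : ℕ} {c : Fin (p + 1) → K} {v : Fin (p + 1) → V}
    (hc : c (Fin.last p) ≠ 0) (h : ∑ i, c i • v i = 0) :
    v (Fin.last p) ∈ Submodule.span K (Set.range (v ∘ Fin.castSucc)) := by
  rw [Fin.sum_univ_castSucc, add_comm] at h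
  have hv : v (Fin.last p) = -(c (Fin.last p))⁻¹ • ∑ i : Fin p, c i.castSucc • v i.castSucc := by
    rw [neg_smul, ← smul_neg, ← eq_neg_of_add_eq_zero_left h, smul_smul, inv_mul_cancel₀ hc,
      one_smul]
  rw [hv]
  exact Submodule.smul_mem _ _ <| Submodule.sum_mem _ fun i _ =>
    Submodule.smul_mem _ _ (Submodule.subset_span ⟨i, rfl⟩)

theorem rank_of_restrict_le_sub_card {K κ : Type*} [Field K] [Fintype κ] {n : ℕ}
    (v : ℕ → κ → K) {E : Finset ℕ} (hE : E ⊆ range n)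
    (h : ∀ e ∈ E, v e ∈ Submodule.span K (v '' Set.Iio e)) :
    (Matrix.of fun i : Fin n => v i).rank ≤ n - #E := by
  classical
  rw [Matrix.rank_eq_finrank_span_row]
  calc _ ≤ Module.finrank K (Submodule.span K ((range n \ E).image v : Set (κ → K))) :=
        Submodule.finrank_mono (Submodule.span_le.2 ?_)
    _ ≤ #((range n \ E).image v) := finrank_span_finset_le_card _
    _ ≤ #(range n \ E) := card_image_le
    _ = n - #E := by rw [card_sdiff_of_subset hE, card_range]
  rintro _ ⟨i, rfl⟩
  refine Submodule.span_mono ?_ (mem_span_image_Iic_diff (E := (E : Set ℕ)) h i)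
  rintro _ ⟨ρ, ⟨hρi, hρE⟩, rfl⟩
  simp only [coe_image, coe_sdiff, coe_range]
  exact ⟨ρ, ⟨lt_of_le_of_lt hρi i.2, hρE⟩, rfl⟩

def withModuli {α β : Type*} (r : α → β → ℝ) (Θ : α → β → ℂ) : α → β → ℂ :=
  fun i j => r i j * Θ i j

theorem exists_pos_withModuli_mem_span {κ : Type*} [Fintype κ] {p : ℕ}
    (h : Fintype.card κ * (p + 1) < 2 ^ p) (Θ : ℕ → κ → ℂ) (hΘ : ∀ ρ j, ‖Θ ρ j‖ = 1) (t : ℕ) :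
    ∃ r : ℕ → κ → ℝ, (∀ ρ j, 0 < r ρ j) ∧ ∀ g < t, withModuli r Θ ((g + 1) * p) ∈
      Submodule.span ℂ (withModuli r Θ '' Set.Iio ((g + 1) * p)) := by
  induction t with
  | zero => exact ⟨fun _ _ => 1, fun _ _ => one_pos, fun g hg => absurd hg (Nat.not_lt_zero g)⟩
  | succ t ih =>
    obtain ⟨r, hr, hspan⟩ := ih
    set a := t * p
    obtain ⟨c, s, hc, hs, hdep⟩ := exists_sum_mul_eq_zero_of_norm_eq_one (ι := Fin (p + 1))
      (by simpa using h) (fun i j => Θ (a + i) j) fun i j => hΘ _ _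
    -- rescale each column of the window `[a, a + p]` so that its first row agrees with row `a`
    let r' : ℕ → κ → ℝ := fun ρ j => if ρ ≤ a then r ρ j else
      if h : ρ - a < p + 1 then r a j / s 0 j * s ⟨ρ - a, h⟩ j else 1
    have hr' : ∀ ρ j, 0 < r' ρ j := by
      intro ρ j
      simp only [r']
      split_ifs
      · exact hr ρ j
      · exact mul_pos (div_pos (hr a j) (hs 0 j)) (hs _ j)
      · exact one_pos
    have hagree : ∀ ρ ≤ a, withModuli r' Θ ρ = withModuli r Θ ρ := fun ρ hρ => by
      funext j
      simp [withModuli, r', hρ]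
    have hwindow : ∀ (i : Fin (p + 1)) j, r' (a + i) j = r a j / s 0 j * s i j := by
      intro i j
      by_cases hi : (i : ℕ) = 0
      · obtain rfl : i = 0 := Fin.ext hi
        simp [r', div_mul_cancel₀ _ (hs 0 j).ne']
      · simp only [r', if_neg (by omega : ¬ a + i ≤ a), Nat.add_sub_cancel_left, dif_pos i.2]
    refine ⟨r', hr', fun g hg => ?_⟩
    rcases Nat.lt_succ_iff_lt_or_eq.1 hg with hg | rfl
    · have hle : (g + 1) * p ≤ a := Nat.mul_le_mul_right _ hg
      have heq : Set.EqOn (withModuli r' Θ) (withModuli r Θ) (Set.Iio ((g + 1) * p)) :=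
        fun ρ hρ => hagree ρ (lt_of_lt_of_le hρ hle).le
      rw [hagree _ hle, heq.image_eq]
      exact hspan g hg
    · have hsum : ∑ i : Fin (p + 1), c i • withModuli r' Θ (a + i) = 0 := by
        funext j
        simp only [Finset.sum_apply, Pi.smul_apply, smul_eq_mul, withModuli, hwindow, Pi.zero_apply]
        rw [← mul_zero ((r a j / s 0 j : ℝ) : ℂ), ← hdep j, mul_sum]
        refine sum_congr rfl fun i _ => ?_
        push_cast
        ring
      rw [show (g + 1) * p = a + p by ring]
      refine Submodule.span_mono ?_ (mem_span_range_castSucc_of_sum_smul_eq_zero (hc _) hsum)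
      rintro _ ⟨i, rfl⟩
      exact ⟨a + i, by simp, rfl⟩

theorem phaseRank_le_rank_withModuli {n m : ℕ} {Θ : Matrix (Fin n) (Fin m) ℂ}
    (hΘ : ∀ i j, ‖Θ i j‖ = 1) {r : Fin n → Fin m → ℝ} (hr : ∀ i j, 0 < r i j) :
    phaseRank Θ ≤ (Matrix.of (withModuli r Θ)).rank := by
  refine Nat.sInf_le ⟨_, fun i j => ?_, fun i j => ?_, rfl⟩
  · exact mul_ne_zero (ofReal_ne_zero.2 (hr i j).ne') (norm_ne_zero_iff.1 (by simp [hΘ]))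
  · have : ((r i j : ℝ) : ℂ) ≠ 0 := ofReal_ne_zero.2 (hr i j).ne'
    simp [withModuli, hΘ, abs_of_pos (hr i j), this]

theorem phaseRank_le_sub_div {n m p : ℕ} (h : m * (p + 1) < 2 ^ p)
    (Θ : Matrix (Fin n) (Fin m) ℂ) (hΘ : ∀ i j, ‖Θ i j‖ = 1) :
    phaseRank Θ ≤ n - (n - 1) / p := by
  set t := (n - 1) / p
  let Θ' : ℕ → Fin m → ℂ := fun ρ j => if h : ρ < n then Θ ⟨ρ, h⟩ j else 1
  obtain ⟨r, hr, hspan⟩ := exists_pos_withModuli_mem_span (by simpa using h) Θ'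
    (fun ρ j => by unfold Θ'; split_ifs; exacts [hΘ _ _, norm_one]) t
  set E := (range t).image fun g => (g + 1) * p
  have hE : E ⊆ range n := by
    intro e he
    obtain ⟨g, hg, rfl⟩ := mem_image.1 he
    have h₁ : (g + 1) * p ≤ t * p := Nat.mul_le_mul_right p (mem_range.1 hg)
    have h₂ : t * p ≤ n - 1 := Nat.div_mul_le_self (n - 1) p
    have : 0 < n := by rcases n with _ | n <;> simp_all [t]
    rw [mem_range]
    omega
  have hEcard : #E = t := by
    refine (card_image_of_injOn fun g hg g' _ hgg' => ?_).trans (card_range t)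
    have hp : 0 < p := Nat.pos_of_ne_zero fun hp => by simp_all [t]
    exact Nat.succ_injective (Nat.eq_of_mul_eq_mul_right hp hgg')
  calc phaseRank Θ ≤ (Matrix.of (withModuli (fun i : Fin n => r i) Θ)).rank :=
        phaseRank_le_rank_withModuli hΘ fun i j => hr i j
    _ = (Matrix.of fun i : Fin n => withModuli r Θ' i).rank := by
        congr
        ext i j
        simp [Θ']
    _ ≤ n - #E := rank_of_restrict_le_sub_card _ hE (by simpa [E] using fun g hg => hspan g hg)
    _ = n - t := by rw [hEcard]

theorem phaseRank_upper_bound_general {n m k : ℕ}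
    (hk : 1 ≤ k) (hkm : (m : ℝ) < 2 ^ (k - 1) / k)
    (Θ : Matrix (Fin n) (Fin m) ℂ) (hphase : ∀ i j, ‖Θ i j‖ = 1) :
    phaseRank Θ ≤ n - (n - 1) / (k - 1) := by
  obtain ⟨p, rfl⟩ : ∃ p, k = p + 1 := ⟨k - 1, by omega⟩
  rw [lt_div_iff₀ (by positivity), Nat.add_sub_cancel] at hkm
  rw [Nat.add_sub_cancel]
  exact phaseRank_le_sub_div (by exact_mod_cast hkm) Θ hphase

/-- Let `Θ` be an `n × m` phase matrix with `n ≤ m` and let `k` be the smallest positive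
integer with `m < 2^{k-1}/k`. Then `rank_phase(Θ) ≤ n - ⌊(n-1)/(k-1)⌋`. -/
theorem phaseRank_upper_bound {n m k : ℕ} (hnm : n ≤ m)
    (hk : 1 ≤ k) (hkm : (m : ℝ) < 2 ^ (k - 1) / k)
    (hkmin : ∀ k' : ℕ, 1 ≤ k' → (m : ℝ) < 2 ^ (k' - 1) / k' → k ≤ k')
    (Θ : Matrix (Fin n) (Fin m) ℂ) (hphase : ∀ i j, ‖Θ i j‖ = 1) :
    phaseRank Θ ≤ n - (n - 1) / (k - 1) :=
  phaseRank_upper_bound_general hk hkm Θ hphase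
end
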